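/- arXiv:1703.08592 — 5 statements merged into one kernel-verified Lean document; each statement's English description precedes it below -/
import Mathlib

section
/- For every t > 0 one has (ℓ−2)·φ(t) ≤ t·φ′(t) ≤ (m−2)·φ(t). -/
open Filter Set Topology

/-!
Write `ψ t = t φ(t)`; the claim is `(ℓ - 1) ψ ≤ t ψ' ≤ (m - 1) ψ`. By (φ3) the function
`g_a(t) = t ψ'(t) - a ψ(t)` has derivative `t ψ'' - (a - 1) ψ'`, so `g_{ℓ-1}` is nondecreasing and
`g_{m-1}` is nonincreasing on `(0, ∞)`. Since `ψ' ≥ 0`, `g_{ℓ-1}(s) ≥ -(ℓ - 1) ψ(s) → 0` as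
`s → 0⁺`, so `g_{ℓ-1} ≥ 0`. If `g_{m-1}(t) = c > 0`, then near `0` we get `s ψ'(s) ≥ c / 2`, so
`ψ(s) - (c / 2) log s` is nondecreasing and `ψ → -∞` at `0⁺`, contradicting `ψ → 0`.
-/

theorem monotoneOn_of_forall_hasDerivAt_nonneg {D : Set ℝ} (hD : Convex ℝ D) {f f' : ℝ → ℝ}
    (hf : ∀ x ∈ D, HasDerivAt f (f' x) x) (hf' : ∀ x ∈ D, 0 ≤ f' x) : MonotoneOn f D :=
  monotoneOn_of_hasDerivWithinAt_nonneg hD (fun x hx => (hf x hx).continuousAt.continuousWithinAt)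
    (fun x hx => (hf x (interior_subset hx)).hasDerivWithinAt)
    (fun x hx => hf' x (interior_subset hx))

theorem tendsto_nhdsGT_zero_atBot_of_le_mul_deriv {f : ℝ → ℝ} {c : ℝ} (hc : 0 < c)
    (hf : ∀ᶠ s in 𝓝[>] 0, DifferentiableAt ℝ f s ∧ c ≤ s * deriv f s) :
    Tendsto f (𝓝[>] 0) atBot := by
  obtain ⟨δ, hδ, hfδ⟩ := (nhdsGT_basis (0 : ℝ)).eventually_iff.mp hf
  have hmono : MonotoneOn (fun s => f s - c * Real.log s) (Ioo 0 δ) := by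
    refine monotoneOn_of_forall_hasDerivAt_nonneg (convex_Ioo 0 δ)
      (fun s hs => (hfδ hs).1.hasDerivAt.sub ((Real.hasDerivAt_log hs.1.ne').const_mul c))
      (fun s hs => ?_)
    have hle := (hfδ hs).2
    rw [sub_nonneg, ← div_eq_mul_inv, div_le_iff₀ hs.1]
    linarith
  set t := δ / 2
  have ht : t ∈ Ioo 0 δ := ⟨half_pos hδ, half_lt_self hδ⟩
  have hbound : Tendsto (fun s => f t - c * Real.log t + c * Real.log s) (𝓝[>] 0) atBot :=
    tendsto_atBot_add_const_left _ _ (Real.tendsto_log_nhdsGT_zero.const_mul_atBot hc)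
  refine tendsto_atBot_mono' _ ?_ hbound
  filter_upwards [Ioo_mem_nhdsGT ht.1] with s hs
  have := hmono ⟨hs.1, hs.2.trans ht.2⟩ ht hs.2.le
  simp only at this
  linarith

section

variable {ψ : ℝ → ℝ}

theorem hasDerivAt_mul_deriv_sub_mul (hψ : ContDiffOn ℝ 2 ψ (Ioi 0)) (a : ℝ) {t : ℝ}
    (ht : 0 < t) :
    HasDerivAt (fun s => s * deriv ψ s - a * ψ s)
      (t * deriv (deriv ψ) t - (a - 1) * deriv ψ t) t := by
  have hψt : DifferentiableAt ℝ ψ t :=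
    (hψ.contDiffAt (Ioi_mem_nhds ht)).differentiableAt (by norm_num)
  have hψ't : DifferentiableAt ℝ (deriv ψ) t :=
    ((hψ.deriv_of_isOpen isOpen_Ioi (by norm_num)).contDiffAt (Ioi_mem_nhds ht)).differentiableAt
      one_ne_zero
  exact (((hasDerivAt_id' t).mul hψ't.hasDerivAt).sub (hψt.hasDerivAt.const_mul a)).congr_deriv
    (by ring)

theorem mul_le_self_mul_deriv (hψ : ContDiffOn ℝ 2 ψ (Ioi 0))
    (hψ0 : Tendsto ψ (𝓝[>] 0) (𝓝 0)) (hmono : MonotoneOn ψ (Ioi 0)) {a : ℝ}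
    (h : ∀ t > 0, (a - 1) * deriv ψ t ≤ t * deriv (deriv ψ) t) {t : ℝ} (ht : 0 < t) :
    a * ψ t ≤ t * deriv ψ t := by
  have hg : MonotoneOn (fun s => s * deriv ψ s - a * ψ s) (Ioi 0) :=
    monotoneOn_of_forall_hasDerivAt_nonneg (convex_Ioi 0)
      (fun s hs => hasDerivAt_mul_deriv_sub_mul hψ a hs) (fun s hs => sub_nonneg.2 (h s hs))
  have hlim : Tendsto (fun s => -(a * ψ s)) (𝓝[>] 0) (𝓝 0) := by
    simpa using (hψ0.const_mul a).neg
  have : 0 ≤ t * deriv ψ t - a * ψ t := by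
    refine le_of_tendsto hlim ?_
    filter_upwards [Ioo_mem_nhdsGT ht] with s hs
    have hderiv : 0 ≤ deriv ψ s :=
      hmono.derivWithin_nonneg.trans_eq (derivWithin_of_isOpen isOpen_Ioi hs.1)
    have := hg hs.1 ht hs.2.le
    simp only at this
    nlinarith [hs.1]
  linarith

theorem self_mul_deriv_le_mul (hψ : ContDiffOn ℝ 2 ψ (Ioi 0))
    (hψ0 : Tendsto ψ (𝓝[>] 0) (𝓝 0)) {b : ℝ}
    (h : ∀ t > 0, t * deriv (deriv ψ) t ≤ (b - 1) * deriv ψ t) {t : ℝ} (ht : 0 < t) :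
    t * deriv ψ t ≤ b * ψ t := by
  by_contra! hlt
  set c := t * deriv ψ t - b * ψ t
  have hc : 0 < c := sub_pos.2 hlt
  have hk : MonotoneOn (fun s => -(s * deriv ψ s - b * ψ s)) (Ioi 0) :=
    monotoneOn_of_forall_hasDerivAt_nonneg (convex_Ioi 0)
      (fun s hs => (hasDerivAt_mul_deriv_sub_mul hψ b hs).neg)
      (fun s hs => by linarith [h s hs])
  have hsmall : ∀ᶠ s in 𝓝[>] 0, -(c / 2) < b * ψ s :=
    (hψ0.const_mul b).eventually_const_lt (by simpa using half_pos hc)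
  have hbot : Tendsto ψ (𝓝[>] 0) atBot := by
    refine tendsto_nhdsGT_zero_atBot_of_le_mul_deriv (half_pos hc) ?_
    filter_upwards [Ioo_mem_nhdsGT ht, hsmall] with s hs hψs
    have hψ's : DifferentiableAt ℝ ψ s :=
      (hψ.contDiffAt (Ioi_mem_nhds hs.1)).differentiableAt (by norm_num)
    have := hk hs.1 ht hs.2.le
    simp only at this
    exact ⟨hψ's, by linarith⟩
  exact not_tendsto_nhds_of_tendsto_atBot hbot 0 hψ0

end

theorem stmt_0_general (φ : ℝ → ℝ) (ℓ m : ℝ)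
    (hφ_C2 : ContDiffOn ℝ 2 φ (Set.Ioi 0))
    (hφ1₀ : Tendsto (fun t => t * φ t) (nhdsWithin 0 (Set.Ioi 0)) (nhds 0))
    (hφ2 : StrictMonoOn (fun t => t * φ t) (Set.Ioi 0))
    (hφ3 : ∀ t > 0,
      (ℓ - 2) * deriv (fun s => s * φ s) t ≤ t * deriv (deriv (fun s => s * φ s)) t ∧
      t * deriv (deriv (fun s => s * φ s)) t ≤ (m - 2) * deriv (fun s => s * φ s) t) :
    ∀ t > 0, (ℓ - 2) * φ t ≤ t * deriv φ t ∧ t * deriv φ t ≤ (m - 2) * φ t := by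
  have hψ : ContDiffOn ℝ 2 (fun s => s * φ s) (Ioi 0) := contDiffOn_id.mul hφ_C2
  intro t ht
  have hderiv : deriv (fun s => s * φ s) t = φ t + t * deriv φ t := by
    have hφt := (hφ_C2.contDiffAt (Ioi_mem_nhds ht)).differentiableAt (by norm_num)
    exact ((hasDerivAt_id' t).mul hφt.hasDerivAt).deriv.trans (by rw [one_mul])
  have lower := mul_le_self_mul_deriv hψ hφ1₀ hφ2.monotoneOn (a := ℓ - 1)
    (fun s hs => by linarith [(hφ3 s hs).1]) ht
  have upper := self_mul_deriv_le_mul hψ hφ1₀ (b := m - 1)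
    (fun s hs => by linarith [(hφ3 s hs).2]) ht
  rw [hderiv] at lower upper
  constructor <;> nlinarith

/-- For every `t > 0` one has `(ℓ−2)·φ(t) ≤ t·φ′(t) ≤ (m−2)·φ(t)`. -/
theorem stmt_0 (φ : ℝ → ℝ) (ℓ m : ℝ)
    (hφ_pos : ∀ t > 0, 0 < φ t)
    (hφ_C2 : ContDiffOn ℝ 2 φ (Set.Ioi 0))
    (hℓ : 1 < ℓ) (hℓm : ℓ ≤ m)
    (hφ1₀ : Tendsto (fun t => t * φ t) (nhdsWithin 0 (Set.Ioi 0)) (nhds 0))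
    (hφ1top : Tendsto (fun t => t * φ t) atTop atTop)
    (hφ2 : StrictMonoOn (fun t => t * φ t) (Set.Ioi 0))
    (hφ3 : ∀ t > 0,
      (ℓ - 2) * deriv (fun s => s * φ s) t ≤ t * deriv (deriv (fun s => s * φ s)) t ∧
      t * deriv (deriv (fun s => s * φ s)) t ≤ (m - 2) * deriv (fun s => s * φ s) t) :
    ∀ t > 0, (ℓ - 2) * φ t ≤ t * deriv φ t ∧ t * deriv φ t ≤ (m - 2) * φ t :=
  stmt_0_general φ ℓ m hφ_C2 hφ1₀ hφ2 hφ3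
end

section
/- Let ℓ* be a real number with m < ℓ*. Then the function Ψ(t) = Φ(t) − (1/ℓ*)·t²·φ(t) is convex on (0,∞); more precisely, for every t > 0 its second derivative satisfies Ψ″(t) ≥ (1 − m/ℓ*)·(tφ(t))′ > 0. -/
open Filter Set MeasureTheory

/-!
Write `g(t) = tφ(t)`. Since `Φ' = g`, the function `Ψ = Φ - c t² φ = Φ - c t g` has
`Ψ'' = (1 - 2c) g' - c t g''`, and the upper half of (φ3), `t g'' ≤ (m - 2) g'`, gives
`Ψ'' ≥ (1 - c m) g'` with `c = 1/ℓ*`. It remains to see that `g' > 0`: `g' ≥ 0` by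
monotonicity, and at a zero of `g'` the same bound `g'' ≤ (m - 2)/t · g'` makes `g'` vanish on a
whole interval by Grönwall's inequality, contradicting strict monotonicity of `g`.
-/

/-- The N-function `Φ(t) = ∫₀ᵗ s·φ(s) ds`. -/
noncomputable def Phi (φ : ℝ → ℝ) (t : ℝ) : ℝ := ∫ s in (0:ℝ)..t, s * φ s

theorem eqOn_zero_of_nonneg_of_deriv_le_mul_self {f f' : ℝ → ℝ} {K a b : ℝ}
    (hf : ContinuousOn f (Icc a b)) (hf' : ∀ x ∈ Ico a b, HasDerivWithinAt f (f' x) (Ici x) x)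
    (hf_nonneg : ∀ x ∈ Icc a b, 0 ≤ f x) (ha : f a = 0)
    (bound : ∀ x ∈ Ico a b, f' x ≤ K * f x) :
    EqOn f 0 (Icc a b) := by
  intro x hx
  refine le_antisymm ?_ (hf_nonneg x hx)
  calc f x ≤ gronwallBound 0 K 0 (x - a) :=
        le_gronwallBound_of_liminf_deriv_right_le hf
          (fun y hy _ hr => by
            simpa only [slope_def_field, div_eq_inv_mul] using (hf' y hy).liminf_right_slope_le hr)
          ha.le
          (by simpa only [add_zero] using bound) x hx
    _ = 0 := gronwallBound_ε0_δ0 K _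

theorem StrictMonoOn.deriv_nonneg_of_isOpen {g : ℝ → ℝ} {s : Set ℝ} {x : ℝ}
    (hg : StrictMonoOn g s) (hs : IsOpen s) (hx : x ∈ s) : 0 ≤ deriv g x :=
  derivWithin_of_isOpen (f := g) hs hx ▸ hg.monotoneOn.derivWithin_nonneg

section DerivFacts

variable {g : ℝ → ℝ} {t : ℝ}

theorem ContDiffOn.hasDerivAt_deriv_of_pos (hg : ContDiffOn ℝ 2 g (Ioi 0)) (ht : 0 < t) :
    HasDerivAt g (deriv g t) t :=
  ((hg.contDiffAt (isOpen_Ioi.mem_nhds ht)).differentiableAt (by norm_num)).hasDerivAt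

theorem ContDiffOn.hasDerivAt_deriv_deriv_of_pos (hg : ContDiffOn ℝ 2 g (Ioi 0)) (ht : 0 < t) :
    HasDerivAt (deriv g) (deriv (deriv g) t) t :=
  (((hg.deriv_of_isOpen isOpen_Ioi (by norm_num : (1 : WithTop ℕ∞) + 1 ≤ 2)).contDiffAt
    (isOpen_Ioi.mem_nhds ht)).differentiableAt one_ne_zero).hasDerivAt

end DerivFacts

theorem deriv_pos_of_strictMonoOn_of_mul_deriv_deriv_le {g : ℝ → ℝ} {c t₀ : ℝ}
    (hg : ContDiffOn ℝ 2 g (Ioi 0)) (hmono : StrictMonoOn g (Ioi 0))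
    (hbound : ∀ t > 0, t * deriv (deriv g) t ≤ c * deriv g t) (ht₀ : 0 < t₀) :
    0 < deriv g t₀ := by
  have hpos : ∀ x ∈ Icc t₀ (t₀ + 1), 0 < x := fun x hx => ht₀.trans_le hx.1
  have hnonneg : ∀ t > 0, 0 ≤ deriv g t := fun t ht =>
    hmono.deriv_nonneg_of_isOpen isOpen_Ioi ht
  refine (hnonneg t₀ ht₀).lt_of_ne' fun h0 => ?_
  have hslow : ∀ x ∈ Ico t₀ (t₀ + 1), deriv (deriv g) x ≤ |c| / t₀ * deriv g x := by
    intro x hx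
    have hx0 := hpos x (Ico_subset_Icc_self hx)
    have hg' := hnonneg x hx0
    refine le_of_mul_le_mul_left ((hbound x hx0).trans ?_) hx0
    calc c * deriv g x ≤ |c| * deriv g x := by gcongr; exact le_abs_self c
      _ ≤ x / t₀ * (|c| * deriv g x) :=
          le_mul_of_one_le_left (mul_nonneg (abs_nonneg c) hg') ((one_le_div ht₀).2 hx.1)
      _ = x * (|c| / t₀ * deriv g x) := by ring
  have hzero : EqOn (deriv g) 0 (Icc t₀ (t₀ + 1)) :=
    eqOn_zero_of_nonneg_of_deriv_le_mul_self
      (fun x hx => (hg.hasDerivAt_deriv_deriv_of_pos (hpos x hx)).continuousAt.continuousWithinAt)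
      (fun x hx =>
        (hg.hasDerivAt_deriv_deriv_of_pos (hpos x (Ico_subset_Icc_self hx))).hasDerivWithinAt)
      (fun x hx => hnonneg x (hpos x hx)) h0 hslow
  obtain ⟨ξ, hξ, hslope⟩ := exists_hasDerivAt_eq_slope g (deriv g) (lt_add_one t₀)
    (fun x hx => (hg.hasDerivAt_deriv_of_pos (hpos x hx)).continuousAt.continuousWithinAt)
    (fun x hx => hg.hasDerivAt_deriv_of_pos (hpos x (Ioo_subset_Icc_self hx)))
  have hinc : g t₀ < g (t₀ + 1) :=
    hmono ht₀ (hpos _ (right_mem_Icc.2 (lt_add_one t₀).le)) (lt_add_one t₀)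
  rw [hzero (Ioo_subset_Icc_self hξ), add_sub_cancel_left, div_one] at hslope
  simp only [Pi.zero_apply] at hslope
  linarith

section Psi

variable {φ : ℝ → ℝ} {c t : ℝ}

theorem hasDerivAt_Phi (hφ : ContinuousOn φ (Ioi 0))
    (hmono : MonotoneOn (fun s => s * φ s) (Ici 0)) (ht : 0 < t) :
    HasDerivAt (Phi φ) (t * φ t) t :=
  intervalIntegral.integral_hasDerivAt_right
    (MonotoneOn.intervalIntegrable (hmono.mono (by simp [uIcc_of_le ht.le, Icc_subset_Ici_self])))
    ((continuousOn_id.mul hφ).stronglyMeasurableAtFilter isOpen_Ioi t ht)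
    ((continuousOn_id.mul hφ).continuousAt (isOpen_Ioi.mem_nhds ht))

theorem hasDerivAt_Phi_sub_mul_sq_mul (hφ : ContDiffOn ℝ 2 φ (Ioi 0))
    (hmono : MonotoneOn (fun s => s * φ s) (Ici 0)) (ht : 0 < t) :
    HasDerivAt (fun t => Phi φ t - c * t ^ 2 * φ t)
      ((1 - c) * (t * φ t) - c * t * deriv (fun s => s * φ s) t) t := by
  have hg : ContDiffOn ℝ 2 (fun s => s * φ s) (Ioi 0) := contDiffOn_id.mul hφ
  have hΨ : (fun t => Phi φ t - c * t ^ 2 * φ t) = fun t => Phi φ t - c * (t * (t * φ t)) := by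
    funext s; ring
  rw [hΨ]
  exact ((hasDerivAt_Phi hφ.continuousOn hmono ht).fun_sub
    (((hasDerivAt_id' t).fun_mul (hg.hasDerivAt_deriv_of_pos ht)).const_mul c)).congr_deriv
    (by ring)

theorem hasDerivAt_deriv_Phi_sub_mul_sq_mul (hφ : ContDiffOn ℝ 2 φ (Ioi 0))
    (hmono : MonotoneOn (fun s => s * φ s) (Ici 0)) (ht : 0 < t) :
    HasDerivAt (deriv fun t => Phi φ t - c * t ^ 2 * φ t)
      ((1 - 2 * c) * deriv (fun s => s * φ s) t
        - c * t * deriv (deriv fun s => s * φ s) t) t := by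
  have hg : ContDiffOn ℝ 2 (fun s => s * φ s) (Ioi 0) := contDiffOn_id.mul hφ
  have heq : (deriv fun t => Phi φ t - c * t ^ 2 * φ t) =ᶠ[nhds t]
      fun t => (1 - c) * (t * φ t) - c * t * deriv (fun s => s * φ s) t :=
    eventually_of_mem (isOpen_Ioi.mem_nhds ht) fun s hs =>
      (hasDerivAt_Phi_sub_mul_sq_mul hφ hmono hs).deriv
  refine HasDerivAt.congr_of_eventuallyEq ?_ heq
  have := ((hg.hasDerivAt_deriv_of_pos ht).const_mul (1 - c)).fun_sub
    (((hasDerivAt_id' t).const_mul c).fun_mul (hg.hasDerivAt_deriv_deriv_of_pos ht))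
  exact this.congr_deriv (by ring)

end Psi

theorem stmt_5_general (φ : ℝ → ℝ) (ℓ m : ℝ)
    (hφ_pos : ∀ t > 0, 0 < φ t)
    (hφ_C2 : ContDiffOn ℝ 2 φ (Set.Ioi 0))
    (hℓ : 1 < ℓ) (hℓm : ℓ ≤ m)
    (hφ2 : StrictMonoOn (fun t => t * φ t) (Set.Ioi 0))
    (hφ3 : ∀ t > 0,
      (ℓ - 2) * deriv (fun s => s * φ s) t ≤ t * deriv (deriv (fun s => s * φ s)) t ∧
      t * deriv (deriv (fun s => s * φ s)) t ≤ (m - 2) * deriv (fun s => s * φ s) t)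
    (lstar : ℝ) (hlstar : m < lstar) :
    ConvexOn ℝ (Set.Ioi 0) (fun t => Phi φ t - (1 / lstar) * t ^ 2 * φ t) ∧
    ∀ t > 0,
      (1 - m / lstar) * deriv (fun s => s * φ s) t ≤
        deriv (deriv (fun t => Phi φ t - (1 / lstar) * t ^ 2 * φ t)) t ∧
      0 < (1 - m / lstar) * deriv (fun s => s * φ s) t := by
  have hmono : MonotoneOn (fun s => s * φ s) (Ici 0) := by
    intro x hx y hy hxy
    rcases (mem_Ici.1 hx).eq_or_lt with rfl | hx0
    · rcases (mem_Ici.1 hy).eq_or_lt with rfl | hy0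
      · rfl
      · simpa only [zero_mul] using (mul_pos hy0 (hφ_pos y hy0)).le
    · exact hφ2.monotoneOn hx0 (hx0.trans_le hxy) hxy
  have hg'_pos : ∀ t > 0, 0 < deriv (fun s => s * φ s) t := fun t ht =>
    deriv_pos_of_strictMonoOn_of_mul_deriv_deriv_le (contDiffOn_id.mul hφ_C2) hφ2
      (fun s hs => (hφ3 s hs).2) ht
  have hlstar_pos : 0 < lstar := by linarith
  have hfactor : 0 < 1 - m / lstar := by
    rw [sub_pos, div_lt_one hlstar_pos]; exact hlstar
  have hΨ'' : ∀ t > 0, (1 - m / lstar) * deriv (fun s => s * φ s) t ≤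
      deriv (deriv (fun t => Phi φ t - (1 / lstar) * t ^ 2 * φ t)) t := by
    intro t ht
    have h := mul_le_mul_of_nonneg_left (hφ3 t ht).2 (one_div_nonneg.2 hlstar_pos.le)
    rw [(hasDerivAt_deriv_Phi_sub_mul_sq_mul hφ_C2 hmono ht).deriv, div_eq_mul_one_div m]
    linarith
  refine ⟨convexOn_of_deriv2_nonneg' (convex_Ioi 0)
    (fun t ht =>
      (hasDerivAt_Phi_sub_mul_sq_mul hφ_C2 hmono ht).differentiableAt.differentiableWithinAt)
    (fun t ht =>
      (hasDerivAt_deriv_Phi_sub_mul_sq_mul hφ_C2 hmono ht).differentiableAt.differentiableWithinAt)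
    fun t ht => ?_, fun t ht => ⟨hΨ'' t ht, mul_pos hfactor (hg'_pos t ht)⟩⟩
  rw [Function.iterate_succ_apply, Function.iterate_one]
  exact (mul_pos hfactor (hg'_pos t ht)).le.trans (hΨ'' t ht)

/-- for `m < ℓ*`, the function `Ψ(t) = Φ(t) − (1/ℓ*)·t²·φ(t)` is convex on
`(0,∞)` and its second derivative satisfies `Ψ″(t) ≥ (1 − m/ℓ*)·(tφ(t))′ > 0` for `t > 0`. -/
theorem stmt_5 (φ : ℝ → ℝ) (ℓ m : ℝ)
    (hφ_pos : ∀ t > 0, 0 < φ t)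
    (hφ_C2 : ContDiffOn ℝ 2 φ (Set.Ioi 0))
    (hℓ : 1 < ℓ) (hℓm : ℓ ≤ m)
    (hφ1₀ : Tendsto (fun t => t * φ t) (nhdsWithin 0 (Set.Ioi 0)) (nhds 0))
    (hφ1top : Tendsto (fun t => t * φ t) atTop atTop)
    (hφ2 : StrictMonoOn (fun t => t * φ t) (Set.Ioi 0))
    (hφ3 : ∀ t > 0,
      (ℓ - 2) * deriv (fun s => s * φ s) t ≤ t * deriv (deriv (fun s => s * φ s)) t ∧
      t * deriv (deriv (fun s => s * φ s)) t ≤ (m - 2) * deriv (fun s => s * φ s) t)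
    (lstar : ℝ) (hlstar : m < lstar) :
    ConvexOn ℝ (Set.Ioi 0) (fun t => Phi φ t - (1 / lstar) * t ^ 2 * φ t) ∧
    ∀ t > 0,
      (1 - m / lstar) * deriv (fun s => s * φ s) t ≤
        deriv (deriv (fun t => Phi φ t - (1 / lstar) * t ^ 2 * φ t)) t ∧
      0 < (1 - m / lstar) * deriv (fun s => s * φ s) t :=
  stmt_5_general φ ℓ m hφ_pos hφ_C2 hℓ hℓm hφ2 hφ3 lstar hlstar
end

section
/- For every t > 0 the integral ∫_Ω φ(t h) h² dμ is finite, and there exists a unique t̃ > 0 such that the function m_h(t) = t·∫_Ω φ(t h) h² dμ − t^{ℓ*−1}·B is strictly increasing on (0, t̃] and strictly decreasing on [t̃, ∞). Moreover m_h(t̃) > 0, m_h(t) → 0 as t → 0⁺, and m_h(t) → −∞ as t → ∞. -/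
open Filter Set MeasureTheory

/-- `m_h(t) = t·∫_Ω φ(t h) h² dμ − t^{ℓ*−1}·B`, interpreting the integrand as `0`
where `h = 0`. -/
noncomputable def mh (φ : ℝ → ℝ) {Ω : Type*} [MeasurableSpace Ω] (μ : Measure Ω)
    (h : Ω → ℝ) (lstar B t : ℝ) : ℝ :=
  t * (∫ x, (if h x = 0 then 0 else φ (t * h x) * h x ^ 2) ∂μ) - t ^ (lstar - 1) * B

/-!
Write `Φ s = s φ s`, so that `m_h t = W t - t ^ (ℓ* - 1) B` with `W t = ∫ Φ (t h) h dμ`.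
Integrating `(φ3)` from `0⁺` gives `(ℓ - 1) Φ ≤ s Φ' ≤ (m - 1) Φ`, so `Φ` and `s Φ'` grow like
powers of `s` between `s ^ (ℓ - 1)` and `s ^ (m - 1)`. These power bounds make every `W t`
finite and justify differentiating under the integral: `t W' t = V t := ∫ (t h) Φ' (t h) h dμ`.
As `V` grows at most like `t ^ (m - 1)` and `m < ℓ*`, `V t / t ^ (ℓ* - 1)` decreases strictly
from `∞` to `0`, so `m_h' t = t⁻¹ (V t - (ℓ* - 1) B t ^ (ℓ* - 1))` changes sign exactly once,
at `t̃`.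
-/

open Topology

section Calculus

variable {f f' : ℝ → ℝ}

lemma monotoneOn_of_hasDerivAt_nonneg {D : Set ℝ} (hD : Convex ℝ D)
    (hf : ∀ x ∈ D, HasDerivAt f (f' x) x) (hf' : ∀ x ∈ interior D, 0 ≤ f' x) :
    MonotoneOn f D :=
  monotoneOn_of_hasDerivWithinAt_nonneg hD (fun x hx => (hf x hx).continuousAt.continuousWithinAt)
    (fun x hx => (hf x (interior_subset hx)).hasDerivWithinAt) hf'

lemma strictMonoOn_of_hasDerivAt_pos {D : Set ℝ} (hD : Convex ℝ D)
    (hf : ∀ x ∈ D, HasDerivAt f (f' x) x) (hf' : ∀ x ∈ interior D, 0 < f' x) :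
    StrictMonoOn f D :=
  strictMonoOn_of_hasDerivWithinAt_pos hD (fun x hx => (hf x hx).continuousAt.continuousWithinAt)
    (fun x hx => (hf x (interior_subset hx)).hasDerivWithinAt) hf'

lemma strictAntiOn_of_hasDerivAt_neg {D : Set ℝ} (hD : Convex ℝ D)
    (hf : ∀ x ∈ D, HasDerivAt f (f' x) x) (hf' : ∀ x ∈ interior D, f' x < 0) :
    StrictAntiOn f D :=
  strictAntiOn_of_hasDerivWithinAt_neg hD (fun x hx => (hf x hx).continuousAt.continuousWithinAt)
    (fun x hx => (hf x (interior_subset hx)).hasDerivWithinAt) hf'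

lemma MonotoneOn.le_of_tendsto_nhdsGT {a b L : ℝ} (hf : MonotoneOn f (Ioc a b))
    (hL : Tendsto f (𝓝[>] a) (𝓝 L)) {t : ℝ} (ht : t ∈ Ioc a b) : L ≤ f t := by
  refine le_of_tendsto hL ?_
  filter_upwards [Ioo_mem_nhdsGT ht.1] with s hs
  exact hf ⟨hs.1, hs.2.le.trans ht.2⟩ ht hs.2.le

lemma mul_rpow_le_of_le_mul_deriv {c : ℝ} (hf : ∀ t > 0, HasDerivAt f (f' t) t)
    (hc : ∀ t > 0, c * f t ≤ t * f' t) {s t u : ℝ} (hs : 0 < s) (hst : s ≤ t) (hu : 0 < u) :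
    f (s * u) * t ^ c ≤ f (t * u) * s ^ c := by
  have hderiv : ∀ r ∈ Ioi (0 : ℝ), HasDerivAt (fun r => f (r * u) * r ^ (-c))
      (r ^ (-c) / r * (r * u * f' (r * u) - c * f (r * u))) r := by
    intro r (hr : 0 < r)
    refine (((hf (r * u) (mul_pos hr hu)).comp r (hasDerivAt_mul_const u)).mul
      (Real.hasDerivAt_rpow_const (p := -c) (Or.inl hr.ne'))).congr_deriv ?_
    rw [Real.rpow_sub_one hr.ne']
    simp only [Function.comp_apply]
    field_simp
    ring
  have hmono : MonotoneOn (fun r => f (r * u) * r ^ (-c)) (Ioi 0) := by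
    refine monotoneOn_of_hasDerivAt_nonneg (convex_Ioi 0) hderiv fun r hr => ?_
    rw [interior_Ioi] at hr
    have hr : 0 < r := hr
    exact mul_nonneg (by positivity) (sub_nonneg.2 (hc _ (mul_pos hr hu)))
  have ht : 0 < t := hs.trans_le hst
  have := hmono hs ht hst
  simp only [Real.rpow_neg hs.le, Real.rpow_neg ht.le, ← div_eq_mul_inv] at this
  rwa [div_le_div_iff₀ (by positivity) (by positivity)] at this

lemma mul_rpow_le_of_mul_deriv_le {c : ℝ} (hf : ∀ t > 0, HasDerivAt f (f' t) t)
    (hc : ∀ t > 0, t * f' t ≤ c * f t) {s t u : ℝ} (hs : 0 < s) (hst : s ≤ t) (hu : 0 < u) :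
    f (t * u) * s ^ c ≤ f (s * u) * t ^ c := by
  have := mul_rpow_le_of_le_mul_deriv (c := c) (f := fun t => -f t) (f' := fun t => -f' t)
    (fun t ht => (hf t ht).neg) (fun t ht => by linarith [hc t ht]) hs hst hu
  linarith

lemma nonneg_of_hasDerivAt_nonneg_of_tendsto_zero (hf : ∀ t > 0, HasDerivAt f (f' t) t)
    (hf' : ∀ t > 0, 0 ≤ f' t) (hf0 : Tendsto f (𝓝[>] 0) (𝓝 0)) {t : ℝ} (ht : 0 < t) :
    0 ≤ f t := by
  have hmono : MonotoneOn f (Ioi 0) :=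
    monotoneOn_of_hasDerivAt_nonneg (convex_Ioi 0) hf (by simpa using hf')
  exact (hmono.mono Ioc_subset_Ioi_self).le_of_tendsto_nhdsGT hf0 ⟨ht, le_rfl⟩

end Calculus

section RegularVariation

variable {F F' F'' : ℝ → ℝ} {ℓ m : ℝ}
  (hF : ∀ t > 0, HasDerivAt F (F' t) t) (hF' : ∀ t > 0, HasDerivAt F' (F'' t) t)
  (hF'' : ∀ t > 0, (ℓ - 2) * F' t ≤ t * F'' t ∧ t * F'' t ≤ (m - 2) * F' t)

include hF' hF'' in
lemma tendsto_mul_deriv_nhdsGT_zero (hℓ : 1 < ℓ) (hℓm : ℓ ≤ m) :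
    Tendsto (fun t => t * F' t) (𝓝[>] 0) (𝓝 0) := by
  have hpow : ∀ p : ℝ, 0 < p → Tendsto (fun t : ℝ => F' 1 * t ^ p) (𝓝[>] 0) (𝓝 0) := fun p hp => by
    simpa using ((tendsto_id.mono_left nhdsWithin_le_nhds).rpow_const_nhds_zero hp).const_mul (F' 1)
  have hsmall : ∀ᶠ t in 𝓝[>] (0 : ℝ), t ∈ Ioc 0 1 := Ioc_mem_nhdsGT one_pos
  -- on `(0, 1]`, `F' 1 * t ^ (m - 2) ≤ F' t ≤ F' 1 * t ^ (ℓ - 2)`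
  refine tendsto_of_tendsto_of_tendsto_of_le_of_le' (hpow (m - 1) (by linarith))
    (hpow (ℓ - 1) (by linarith)) ?_ ?_
  · filter_upwards [hsmall] with t ⟨ht, ht1⟩
    have := mul_rpow_le_of_mul_deriv_le hF' (fun t ht => (hF'' t ht).2) ht ht1 one_pos
    simp only [mul_one, Real.one_rpow] at this
    rw [show m - 1 = (m - 2) + 1 by ring, Real.rpow_add_one ht.ne']
    nlinarith
  · filter_upwards [hsmall] with t ⟨ht, ht1⟩
    have := mul_rpow_le_of_le_mul_deriv hF' (fun t ht => (hF'' t ht).1) ht ht1 one_pos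
    simp only [mul_one, Real.one_rpow] at this
    rw [show ℓ - 1 = (ℓ - 2) + 1 by ring, Real.rpow_add_one ht.ne']
    nlinarith

include hF hF' hF'' in
/-- Integrating `(ℓ - 1) F' ≤ (t F')' ≤ (m - 1) F'` from `0`, where both `F` and `t F'` vanish. -/
lemma mul_deriv_mem_Icc (hF0 : Tendsto F (𝓝[>] 0) (𝓝 0)) (hℓ : 1 < ℓ) (hℓm : ℓ ≤ m)
    {t : ℝ} (ht : 0 < t) : t * F' t ∈ Icc ((ℓ - 1) * F t) ((m - 1) * F t) := by
  have hQ : ∀ t > 0, HasDerivAt (fun t => t * F' t) (1 * F' t + t * F'' t) t :=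
    fun t ht => (hasDerivAt_id t).mul (hF' t ht)
  have hQ0 := tendsto_mul_deriv_nhdsGT_zero hF' hF'' hℓ hℓm
  constructor
  · have := nonneg_of_hasDerivAt_nonneg_of_tendsto_zero (f := fun t => t * F' t - (ℓ - 1) * F t)
      (fun t ht => (hQ t ht).sub ((hF t ht).const_mul (ℓ - 1)))
      (fun t ht => by linarith [(hF'' t ht).1]) (by simpa using hQ0.sub (hF0.const_mul (ℓ - 1))) ht
    linarith
  · have := nonneg_of_hasDerivAt_nonneg_of_tendsto_zero (f := fun t => (m - 1) * F t - t * F' t)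
      (fun t ht => ((hF t ht).const_mul (m - 1)).sub (hQ t ht))
      (fun t ht => by linarith [(hF'' t ht).2]) (by simpa using (hF0.const_mul (m - 1)).sub hQ0) ht
    linarith

end RegularVariation

section Peak

lemma StrictAntiOn.exists_Ioi_crossing {R : ℝ → ℝ} {c : ℝ} (hR : StrictAntiOn R (Ioi 0))
    (hlow : ∃ t > 0, c < R t) (hhigh : ∃ t > 0, R t < c) :
    ∃ τ > 0, (∀ t ∈ Ioo 0 τ, c < R t) ∧ ∀ t > τ, R t < c := by
  obtain ⟨t₁, ht₁, hct₁⟩ := hlow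
  obtain ⟨t₂, ht₂, hct₂⟩ := hhigh
  set S := {t | 0 < t ∧ c ≤ R t}
  have hS : BddAbove S :=
    ⟨t₂, fun s ⟨hs, hcs⟩ => not_lt.1 fun hlt => (hR ht₂ hs hlt).not_ge (by linarith)⟩
  have ht₁S : t₁ ∈ S := ⟨ht₁, hct₁.le⟩
  have hτ : t₁ ≤ sSup S := le_csSup hS ht₁S
  refine ⟨sSup S, ht₁.trans_le hτ, fun t ⟨ht, htτ⟩ => ?_, fun t ht => ?_⟩
  · obtain ⟨s, ⟨hs, hcs⟩, hts⟩ := exists_lt_of_lt_csSup ⟨t₁, ht₁S⟩ htτ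
    exact hcs.trans_lt (hR ht hs hts)
  · exact not_le.1 fun hct => (le_csSup hS ⟨(ht₁.trans_le hτ).trans ht, hct⟩).not_gt ht

lemma exists_crossing_rpow {V : ℝ → ℝ} {q p c : ℝ} (hV_pos : ∀ t > 0, 0 < V t)
    (hV : ∀ s t, 0 < s → s ≤ t → V t * s ^ q ≤ V s * t ^ q) (hqp : q < p) (hc : 0 < c) :
    ∃ τ > 0, (∀ t ∈ Ioo 0 τ, c * t ^ p < V t) ∧ ∀ t > τ, V t < c * t ^ p := by
  have hsplit : ∀ t > (0 : ℝ), t ^ p = t ^ q * t ^ (p - q) := fun t ht => by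
    rw [← Real.rpow_add ht, add_sub_cancel]
  have hanti : StrictAntiOn (fun t => V t / t ^ p) (Ioi 0) := by
    intro s (hs : 0 < s) t (ht : 0 < t) hst
    have := hV s t hs hst.le
    have := hV_pos s hs
    rw [div_lt_div_iff₀ (by positivity) (by positivity)]
    calc V t * s ^ p = V t * s ^ q * s ^ (p - q) := by rw [hsplit s hs]; ring
      _ ≤ V s * t ^ q * s ^ (p - q) := by gcongr
      _ < V s * t ^ q * t ^ (p - q) := by gcongr
      _ = V s * t ^ p := by rw [hsplit t ht]; ring
  have hV1 := hV_pos 1 one_pos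
  have hpow : ∀ t > (0 : ℝ), V 1 * t ^ (q - p) = V 1 * t ^ q / t ^ p := fun t ht => by
    rw [Real.rpow_sub ht, mul_div_assoc]
  have hlow : ∃ t > 0, c < V t / t ^ p := by
    have hlim : Tendsto (fun t : ℝ => V 1 * t ^ (q - p)) (𝓝[>] 0) atTop :=
      (tendsto_rpow_neg_nhdsGT_zero (by linarith)).const_mul_atTop hV1
    obtain ⟨t, hct, ht, ht1⟩ :=
      ((hlim.eventually_gt_atTop c).and (Ioc_mem_nhdsGT one_pos)).exists
    refine ⟨t, ht, hct.trans_le ?_⟩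
    have := hV t 1 ht ht1
    rw [Real.one_rpow, mul_one] at this
    rw [hpow t ht]
    gcongr
  have hhigh : ∃ t > 0, V t / t ^ p < c := by
    have hlim : Tendsto (fun t : ℝ => V 1 * t ^ (q - p)) atTop (𝓝 0) := by
      simpa [neg_sub] using (tendsto_rpow_neg_atTop (sub_pos.2 hqp)).const_mul (V 1)
    obtain ⟨t, hct, ht1⟩ := ((hlim.eventually (gt_mem_nhds hc)).and (eventually_ge_atTop 1)).exists
    have ht : 0 < t := one_pos.trans_le ht1
    refine ⟨t, ht, lt_of_le_of_lt ?_ hct⟩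
    have := hV 1 t one_pos ht1
    rw [Real.one_rpow, mul_one] at this
    rw [hpow t ht]
    gcongr
  obtain ⟨τ, hτ, hbelow, habove⟩ := hanti.exists_Ioi_crossing hlow hhigh
  refine ⟨τ, hτ, fun t ht => ?_, fun t ht => ?_⟩
  · have := hbelow t ht
    rwa [lt_div_iff₀ (by have := ht.1; positivity)] at this
  · have := habove t ht
    rwa [div_lt_iff₀ (by have := hτ.trans ht; positivity)] at this

lemma eq_of_strictMonoOn_Ioc_of_strictAntiOn_Ici {f : ℝ → ℝ} {a b : ℝ} (ha : 0 < a) (hb : 0 < b)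
    (hfa : StrictMonoOn f (Ioc 0 a)) (hfa' : StrictAntiOn f (Ici a))
    (hfb : StrictMonoOn f (Ioc 0 b)) (hfb' : StrictAntiOn f (Ici b)) : a = b := by
  rcases lt_trichotomy a b with hab | rfl | hba
  · exact ((hfb ⟨ha, hab.le⟩ ⟨hb, le_rfl⟩ hab).trans (hfa' self_mem_Ici hab.le hab)).false.elim
  · rfl
  · exact ((hfa ⟨hb, hba.le⟩ ⟨ha, le_rfl⟩ hba).trans (hfb' self_mem_Ici hba.le hba)).false.elim

lemma tendsto_mul_rpow_sub_rpow_mul_atBot (C : ℝ) {q p B : ℝ} (hqp : q < p) (hp : 0 < p)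
    (hB : 0 < B) : Tendsto (fun t : ℝ => C * t ^ q - t ^ p * B) atTop atBot := by
  have hlim : Tendsto (fun t : ℝ => C * t ^ (q - p) - B) atTop (𝓝 (-B)) := by
    simpa [neg_sub] using ((tendsto_rpow_neg_atTop (sub_pos.2 hqp)).const_mul C).sub_const B
  refine ((tendsto_rpow_atTop hp).atTop_mul_neg (neg_neg_of_pos hB) hlim).congr' ?_
  filter_upwards [eventually_gt_atTop 0] with t ht
  rw [Real.rpow_sub ht]
  field_simp

variable {W V : ℝ → ℝ} {q p B : ℝ}

theorem exists_unique_peak (hW : ∀ t > 0, HasDerivAt W (t⁻¹ * V t) t)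
    (hW0 : Tendsto W (𝓝[>] 0) (𝓝 0)) (hW_growth : ∀ t ≥ 1, W t ≤ W 1 * t ^ q)
    (hV_pos : ∀ t > 0, 0 < V t) (hV : ∀ s t, 0 < s → s ≤ t → V t * s ^ q ≤ V s * t ^ q)
    (hqp : q < p) (hp : 0 < p) (hB : 0 < B) :
    (∃! τ, 0 < τ ∧ StrictMonoOn (fun t => W t - t ^ p * B) (Ioc 0 τ) ∧
      StrictAntiOn (fun t => W t - t ^ p * B) (Ici τ) ∧ 0 < W τ - τ ^ p * B) ∧
    Tendsto (fun t => W t - t ^ p * B) (𝓝[>] 0) (𝓝 0) ∧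
    Tendsto (fun t => W t - t ^ p * B) atTop atBot := by
  set f := fun t => W t - t ^ p * B
  have hf : ∀ t > 0, HasDerivAt f (t⁻¹ * (V t - p * B * t ^ p)) t := fun t ht => by
    refine ((hW t ht).sub ((Real.hasDerivAt_rpow_const (Or.inl ht.ne')).mul_const B)).congr_deriv ?_
    rw [Real.rpow_sub_one ht.ne']
    field_simp
  obtain ⟨τ, hτ, hbelow, habove⟩ := exists_crossing_rpow hV_pos hV hqp (mul_pos hp hB)
  have hmono : StrictMonoOn f (Ioc 0 τ) := by
    refine strictMonoOn_of_hasDerivAt_pos (convex_Ioc 0 τ) (fun t ht => hf t ht.1) ?_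
    rw [interior_Ioc]
    exact fun t ht => mul_pos (inv_pos.2 ht.1) (sub_pos.2 (hbelow t ht))
  have hanti : StrictAntiOn f (Ici τ) := by
    refine strictAntiOn_of_hasDerivAt_neg (convex_Ici τ) (fun t ht => hf t (hτ.trans_le ht)) ?_
    rw [interior_Ici]
    exact fun t ht => mul_neg_of_pos_of_neg (inv_pos.2 (hτ.trans ht)) (sub_neg.2 (habove t ht))
  have hf0 : Tendsto f (𝓝[>] 0) (𝓝 0) := by
    simpa using hW0.sub
      (((tendsto_id.mono_left nhdsWithin_le_nhds).rpow_const_nhds_zero hp).mul_const B)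
  have hhalf : τ / 2 ∈ Ioc 0 τ := ⟨by positivity, by linarith⟩
  refine ⟨⟨τ, ⟨hτ, hmono, hanti, ?_⟩, fun σ ⟨hσ, hmonoσ, hantiσ, _⟩ =>
    eq_of_strictMonoOn_Ioc_of_strictAntiOn_Ici hσ hτ hmonoσ hantiσ hmono hanti⟩, hf0, ?_⟩
  · exact (hmono.monotoneOn.le_of_tendsto_nhdsGT hf0 hhalf).trans_lt
      (hmono hhalf ⟨hτ, le_rfl⟩ (by linarith))
  · refine tendsto_atBot_mono' atTop ?_ (tendsto_mul_rpow_sub_rpow_mul_atBot (W 1) hqp hp hB)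
    filter_upwards [eventually_ge_atTop 1] with t ht
    linarith [hW_growth t ht]

end Peak

section ScaledIntegral

variable {Ω : Type*} [MeasurableSpace Ω] {μ : Measure Ω} {h : Ω → ℝ}

noncomputable def scaledIntegral (F : ℝ → ℝ) (μ : Measure Ω) (h : Ω → ℝ) (t : ℝ) : ℝ :=
  ∫ x, F (t * h x) * h x ∂μ

lemma measurable_comp_mul_mul (hh : Measurable h) (h_nonneg : ∀ x, 0 ≤ h x) {F : ℝ → ℝ}
    (hF : ContinuousOn F (Ioi 0)) {t : ℝ} (ht : 0 < t) :
    Measurable fun x => F (t * h x) * h x := by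
  classical
  have hF' : Measurable ((Ioi 0).piecewise F 0) :=
    hF.measurable_piecewise continuousOn_const measurableSet_Ioi
  convert (hF'.comp (hh.const_mul t)).mul hh using 1
  funext x
  rcases (h_nonneg x).eq_or_lt with hx | hx
  · simp [← hx]
  · simp only [Pi.mul_apply, Function.comp_apply,
      Set.piecewise_eq_of_mem _ _ _ (show t * h x ∈ Ioi 0 from mul_pos ht hx)]

variable (h_nonneg : ∀ x, 0 ≤ h x)
include h_nonneg

lemma integrable_comp_mul_mul_of_abs_le {F G : ℝ → ℝ} {s t C : ℝ}
    (hG : Integrable (fun x => G (s * h x) * h x) μ)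
    (hF : AEStronglyMeasurable (fun x => F (t * h x) * h x) μ)
    (hle : ∀ u > 0, |F (t * u)| ≤ C * G (s * u)) :
    Integrable (fun x => F (t * h x) * h x) μ := by
  refine (hG.const_mul C).mono' hF (ae_of_all _ fun x => ?_)
  rcases (h_nonneg x).eq_or_lt with hx | hx
  · simp [← hx]
  · rw [Real.norm_eq_abs, abs_mul, abs_of_pos hx, ← mul_assoc]
    exact mul_le_mul_of_nonneg_right (hle _ hx) hx.le

lemma scaledIntegral_mul_le_mul {F G : ℝ → ℝ} {s t a b : ℝ}
    (hF : Integrable (fun x => F (t * h x) * h x) μ)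
    (hG : Integrable (fun x => G (s * h x) * h x) μ)
    (hle : ∀ u > 0, F (t * u) * a ≤ G (s * u) * b) :
    scaledIntegral F μ h t * a ≤ scaledIntegral G μ h s * b := by
  rw [scaledIntegral, scaledIntegral, ← integral_mul_const, ← integral_mul_const]
  refine integral_mono (hF.mul_const a) (hG.mul_const b) fun x => ?_
  rcases (h_nonneg x).eq_or_lt with hx | hx
  · simp [← hx]
  · calc F (t * h x) * h x * a = F (t * h x) * a * h x := by ring
      _ ≤ G (s * h x) * b * h x := mul_le_mul_of_nonneg_right (hle _ hx) hx.le
      _ = G (s * h x) * h x * b := by ring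

lemma hasDerivAt_scaledIntegral (hh : Measurable h) {F F' : ℝ → ℝ} {c : ℝ} (hc : 0 ≤ c)
    (hF : ∀ s > 0, HasDerivAt F (F' s) s) (hF'_cont : ContinuousOn F' (Ioi 0))
    (hF' : ∀ s > 0, 0 ≤ F' s ∧ s * F' s ≤ c * F s)
    (hint : ∀ s > 0, Integrable (fun x => F (s * h x) * h x) μ) {t : ℝ} (ht : 0 < t) :
    HasDerivAt (scaledIntegral F μ h) (t⁻¹ * scaledIntegral (fun s => s * F' s) μ h t) t := by
  have hFmono : MonotoneOn F (Ioi 0) := monotoneOn_of_hasDerivAt_nonneg (convex_Ioi 0) hF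
    fun s hs => (hF' s (interior_subset hs)).1
  have hnhds : Ioo (t / 2) (2 * t) ∈ 𝓝 t := Ioo_mem_nhds (by linarith) (by linarith)
  have hbound : ∀ x, ∀ r ∈ Ioo (t / 2) (2 * t),
      ‖F' (r * h x) * h x ^ 2‖ ≤ 2 * c / t * (F (2 * t * h x) * h x) := by
    intro x r ⟨hr, hr'⟩
    have hr0 : 0 < r := by linarith
    rcases (h_nonneg x).eq_or_lt with hx | hx
    · simp [← hx]
    have hru := mul_pos hr0 hx
    obtain ⟨h0, hle⟩ := hF' _ hru
    have h2tu : 0 < 2 * t * h x := by positivity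
    have hmono := hFmono hru h2tu (by gcongr)
    have hF2 : 0 ≤ c * F (2 * t * h x) :=
      (mul_nonneg h2tu.le (hF' _ h2tu).1).trans (hF' _ h2tu).2
    rw [Real.norm_eq_abs, abs_of_nonneg (by positivity)]
    calc F' (r * h x) * h x ^ 2 = (r * h x * F' (r * h x)) * h x / r := by field_simp
      _ ≤ c * F (2 * t * h x) * h x / r := by
        gcongr ?_ * _ / _
        exact hle.trans (mul_le_mul_of_nonneg_left hmono hc)
      _ ≤ c * F (2 * t * h x) * h x / (t / 2) := by gcongr
      _ = 2 * c / t * (F (2 * t * h x) * h x) := by field_simp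
  have hderiv : ∀ x, ∀ r ∈ Ioo (t / 2) (2 * t),
      HasDerivAt (fun r => F (r * h x) * h x) (F' (r * h x) * h x ^ 2) r := by
    intro x r ⟨hr, _⟩
    rcases (h_nonneg x).eq_or_lt with hx | hx
    · simpa [← hx] using hasDerivAt_const r (0 : ℝ)
    refine (((hF _ (mul_pos (by linarith) hx)).comp r (hasDerivAt_mul_const (h x))).mul_const
      (h x)).congr_deriv ?_
    ring
  have hF'_meas : Measurable fun x => F' (t * h x) * h x ^ 2 := by
    convert (measurable_comp_mul_mul hh h_nonneg hF'_cont ht).mul hh using 1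
    funext x
    simp only [Pi.mul_apply]
    ring
  have key := hasDerivAt_integral_of_dominated_loc_of_deriv_le hnhds
    (eventually_of_mem (Ioi_mem_nhds ht) fun s hs =>
      (measurable_comp_mul_mul hh h_nonneg (fun u hu => (hF u hu).continuousAt.continuousWithinAt)
        hs).aestronglyMeasurable)
    (hint t ht) hF'_meas.aestronglyMeasurable (ae_of_all _ (hbound ·))
    ((hint (2 * t) (by positivity)).const_mul _) (ae_of_all _ (hderiv ·))
  refine key.2.congr_deriv ?_
  rw [scaledIntegral, ← integral_const_mul]
  refine integral_congr_ae (ae_of_all _ fun x => ?_)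
  field_simp

end ScaledIntegral

section FiberingMap

variable {F F' F'' : ℝ → ℝ} {ℓ m c : ℝ} {Ω : Type*} [MeasurableSpace Ω] {μ : Measure Ω}
  {h : Ω → ℝ}

lemma scaledIntegral_mul_rpow_le_of_mul_deriv_le (h_nonneg : ∀ x, 0 ≤ h x)
    (hF : ∀ t > 0, HasDerivAt F (F' t) t) (hc : ∀ t > 0, t * F' t ≤ c * F t)
    (hint : ∀ t > 0, Integrable (fun x => F (t * h x) * h x) μ) ⦃s t : ℝ⦄ (hs : 0 < s)
    (hst : s ≤ t) : scaledIntegral F μ h t * s ^ c ≤ scaledIntegral F μ h s * t ^ c :=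
  scaledIntegral_mul_le_mul h_nonneg (hint t (hs.trans_le hst)) (hint s hs) fun _ hu =>
    mul_rpow_le_of_mul_deriv_le hF hc hs hst hu

lemma scaledIntegral_mul_rpow_le_of_le_mul_deriv (h_nonneg : ∀ x, 0 ≤ h x)
    (hF : ∀ t > 0, HasDerivAt F (F' t) t) (hc : ∀ t > 0, c * F t ≤ t * F' t)
    (hint : ∀ t > 0, Integrable (fun x => F (t * h x) * h x) μ) ⦃s t : ℝ⦄ (hs : 0 < s)
    (hst : s ≤ t) : scaledIntegral F μ h s * t ^ c ≤ scaledIntegral F μ h t * s ^ c :=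
  scaledIntegral_mul_le_mul h_nonneg (hint s hs) (hint t (hs.trans_le hst)) fun _ hu =>
    mul_rpow_le_of_le_mul_deriv hF hc hs hst hu

lemma integrable_comp_mul_mul_of_mul_deriv_mem_Icc (hh : Measurable h) (h_nonneg : ∀ x, 0 ≤ h x)
    (hF : ∀ t > 0, HasDerivAt F (F' t) t) (hF_nonneg : ∀ t > 0, 0 ≤ F t)
    (hF_bound : ∀ t > 0, t * F' t ∈ Icc ((ℓ - 1) * F t) ((m - 1) * F t))
    (h_int : Integrable (fun x => F (h x) * h x) μ) {t : ℝ} (ht : 0 < t) :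
    Integrable (fun x => F (t * h x) * h x) μ := by
  refine integrable_comp_mul_mul_of_abs_le h_nonneg (G := F) (s := 1)
    (C := max (t ^ (ℓ - 1)) (t ^ (m - 1))) (by simpa using h_int)
    (measurable_comp_mul_mul hh h_nonneg
      (fun u hu => (hF u hu).continuousAt.continuousWithinAt) ht).aestronglyMeasurable
    fun u hu => ?_
  rw [abs_of_nonneg (hF_nonneg _ (mul_pos ht hu)), one_mul]
  rcases le_total t 1 with ht1 | ht1
  · have := mul_rpow_le_of_le_mul_deriv hF (fun t ht => (hF_bound t ht).1) ht ht1 hu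
    rw [Real.one_rpow, mul_one, one_mul] at this
    nlinarith [le_max_left (t ^ (ℓ - 1)) (t ^ (m - 1)), hF_nonneg u hu]
  · have := mul_rpow_le_of_mul_deriv_le hF (fun t ht => (hF_bound t ht).2) one_pos ht1 hu
    rw [Real.one_rpow, mul_one, one_mul] at this
    nlinarith [le_max_right (t ^ (ℓ - 1)) (t ^ (m - 1)), hF_nonneg u hu]

lemma scaledIntegral_pos (h_nonneg : ∀ x, 0 ≤ h x) (hF : ∀ t > 0, HasDerivAt F (F' t) t)
    (hF_bound : ∀ t > 0, t * F' t ∈ Icc ((ℓ - 1) * F t) ((m - 1) * F t))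
    (hint : ∀ t > 0, Integrable (fun x => F (t * h x) * h x) μ)
    (h_pos : 0 < scaledIntegral F μ h 1) {t : ℝ} (ht : 0 < t) : 0 < scaledIntegral F μ h t := by
  rcases le_total t 1 with ht1 | ht1
  · have := scaledIntegral_mul_rpow_le_of_mul_deriv_le h_nonneg hF
      (fun t ht => (hF_bound t ht).2) hint ht ht1
    rw [Real.one_rpow, mul_one] at this
    exact (mul_pos h_pos (by positivity)).trans_le this
  · have := scaledIntegral_mul_rpow_le_of_le_mul_deriv h_nonneg hF
      (fun t ht => (hF_bound t ht).1) hint one_pos ht1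
    rw [Real.one_rpow, mul_one] at this
    exact (mul_pos h_pos (by positivity)).trans_le this

lemma tendsto_scaledIntegral_nhdsGT_zero (h_nonneg : ∀ x, 0 ≤ h x)
    (hF : ∀ t > 0, HasDerivAt F (F' t) t)
    (hF_bound : ∀ t > 0, t * F' t ∈ Icc ((ℓ - 1) * F t) ((m - 1) * F t))
    (hint : ∀ t > 0, Integrable (fun x => F (t * h x) * h x) μ)
    (h_pos : 0 < scaledIntegral F μ h 1) (hℓ : 1 < ℓ) :
    Tendsto (scaledIntegral F μ h) (𝓝[>] 0) (𝓝 0) := by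
  refine tendsto_of_tendsto_of_tendsto_of_le_of_le' tendsto_const_nhds
    (by simpa using ((tendsto_id.mono_left nhdsWithin_le_nhds).rpow_const_nhds_zero
      (by linarith : 0 < ℓ - 1)).const_mul (scaledIntegral F μ h 1)) ?_ ?_
  · filter_upwards [self_mem_nhdsWithin] with t ht
    exact (scaledIntegral_pos h_nonneg hF hF_bound hint h_pos ht).le
  · filter_upwards [Ioc_mem_nhdsGT one_pos] with t ⟨ht, ht1⟩
    simpa using scaledIntegral_mul_rpow_le_of_le_mul_deriv h_nonneg hF
      (fun t ht => (hF_bound t ht).1) hint ht ht1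

theorem exists_unique_peak_scaledIntegral (hF : ∀ t > 0, HasDerivAt F (F' t) t)
    (hF' : ∀ t > 0, HasDerivAt F' (F'' t) t)
    (hF'' : ∀ t > 0, (ℓ - 2) * F' t ≤ t * F'' t ∧ t * F'' t ≤ (m - 2) * F' t)
    (hF0 : Tendsto F (𝓝[>] 0) (𝓝 0)) (hF_nonneg : ∀ t > 0, 0 ≤ F t) (hℓ : 1 < ℓ)
    (hℓm : ℓ ≤ m) (hh : Measurable h) (h_nonneg : ∀ x, 0 ≤ h x)
    (h_int : Integrable (fun x => F (h x) * h x) μ) (h_pos : 0 < scaledIntegral F μ h 1)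
    {p B : ℝ} (hmp : m - 1 < p) (hB : 0 < B) :
    (∀ t > 0, Integrable (fun x => F (t * h x) * h x) μ) ∧
    (∃! τ, 0 < τ ∧ StrictMonoOn (fun t => scaledIntegral F μ h t - t ^ p * B) (Ioc 0 τ) ∧
      StrictAntiOn (fun t => scaledIntegral F μ h t - t ^ p * B) (Ici τ) ∧
      0 < scaledIntegral F μ h τ - τ ^ p * B) ∧
    Tendsto (fun t => scaledIntegral F μ h t - t ^ p * B) (𝓝[>] 0) (𝓝 0) ∧
    Tendsto (fun t => scaledIntegral F μ h t - t ^ p * B) atTop atBot := by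
  have hF_bound := fun t (ht : 0 < t) => mul_deriv_mem_Icc hF hF' hF'' hF0 hℓ hℓm ht
  have hF'_nonneg : ∀ t > 0, 0 ≤ F' t := fun t ht => by
    nlinarith [(hF_bound t ht).1, hF_nonneg t ht]
  have hint := fun t (ht : 0 < t) =>
    integrable_comp_mul_mul_of_mul_deriv_mem_Icc hh h_nonneg hF hF_nonneg hF_bound h_int ht
  have hQ : ∀ t > 0, HasDerivAt (fun t => t * F' t) (1 * F' t + t * F'' t) t :=
    fun t ht => (hasDerivAt_id t).mul (hF' t ht)
  have hQint : ∀ t > 0, Integrable (fun x => (t * h x) * F' (t * h x) * h x) μ := fun t ht =>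
    integrable_comp_mul_mul_of_abs_le h_nonneg (F := fun s => s * F' s) (C := m - 1) (hint t ht)
      (measurable_comp_mul_mul hh h_nonneg
        (fun u hu => (hQ u hu).continuousAt.continuousWithinAt) ht).aestronglyMeasurable
      fun u hu => by
        rw [abs_of_nonneg (mul_nonneg (mul_pos ht hu).le (hF'_nonneg _ (mul_pos ht hu)))]
        exact (hF_bound _ (mul_pos ht hu)).2
  have hW_growth : ∀ t ≥ 1, scaledIntegral F μ h t ≤ scaledIntegral F μ h 1 * t ^ (m - 1) :=
    fun t ht => by
      simpa using scaledIntegral_mul_rpow_le_of_mul_deriv_le h_nonneg hF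
        (fun s hs => (hF_bound s hs).2) hint one_pos ht
  have hV_pos : ∀ t > 0, 0 < scaledIntegral (fun t => t * F' t) μ h t := fun t ht => by
    have := scaledIntegral_mul_le_mul h_nonneg (hint t ht) (hQint t ht)
      (G := fun s => s * F' s) (a := ℓ - 1) (b := 1)
      fun u hu => by linarith [(hF_bound _ (mul_pos ht hu)).1]
    nlinarith [scaledIntegral_pos h_nonneg hF hF_bound hint h_pos ht]
  have hV_growth := scaledIntegral_mul_rpow_le_of_mul_deriv_le (c := m - 1) h_nonneg hQ
    (fun t ht => by nlinarith [mul_le_mul_of_nonneg_left (hF'' t ht).2 ht.le]) hQint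
  refine ⟨hint, exists_unique_peak
    (fun t ht => hasDerivAt_scaledIntegral h_nonneg hh (by linarith) hF
      (fun u hu => (hF' u hu).continuousAt.continuousWithinAt)
      (fun u hu => ⟨hF'_nonneg u hu, (hF_bound u hu).2⟩) hint ht)
    (tendsto_scaledIntegral_nhdsGT_zero h_nonneg hF hF_bound hint h_pos hℓ) hW_growth hV_pos
    hV_growth hmp (by linarith) hB⟩

end FiberingMap

lemma ContDiffOn.hasDerivAt_and_hasDerivAt_deriv {f : ℝ → ℝ} {s : Set ℝ}
    (hf : ContDiffOn ℝ 2 f s) (hs : IsOpen s) ⦃t : ℝ⦄ (ht : t ∈ s) :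
    HasDerivAt f (deriv f t) t ∧ HasDerivAt (deriv f) (deriv (deriv f) t) t :=
  ⟨((hf.differentiableOn (by norm_num)).differentiableAt (hs.mem_nhds ht)).hasDerivAt,
    (((hf.deriv_of_isOpen hs (m := 1) (by norm_num)).differentiableOn one_ne_zero).differentiableAt
      (hs.mem_nhds ht)).hasDerivAt⟩

lemma mul_ite_eq_mul_mul (φ : ℝ → ℝ) (t u : ℝ) :
    t * (if u = 0 then 0 else φ (t * u) * u ^ 2) = t * u * φ (t * u) * u := by
  split_ifs with hu
  · simp [hu]
  · ring

lemma mh_eq_scaledIntegral (φ : ℝ → ℝ) {Ω : Type*} [MeasurableSpace Ω] (μ : Measure Ω)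
    (h : Ω → ℝ) (lstar B : ℝ) :
    mh φ μ h lstar B = fun t => scaledIntegral (fun s => s * φ s) μ h t - t ^ (lstar - 1) * B := by
  funext t
  simp only [mh, scaledIntegral, ← integral_const_mul, mul_ite_eq_mul_mul]

theorem stmt_9_general (φ : ℝ → ℝ) (ℓ m : ℝ)
    (hφ_pos : ∀ t > 0, 0 < φ t)
    (hφ_C2 : ContDiffOn ℝ 2 φ (Set.Ioi 0))
    (hℓ : 1 < ℓ) (hℓm : ℓ ≤ m)
    (hφ1₀ : Tendsto (fun t => t * φ t) (nhdsWithin 0 (Set.Ioi 0)) (nhds 0))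
    (hφ3 : ∀ t > 0,
      (ℓ - 2) * deriv (fun s => s * φ s) t ≤ t * deriv (deriv (fun s => s * φ s)) t ∧
      t * deriv (deriv (fun s => s * φ s)) t ≤ (m - 2) * deriv (fun s => s * φ s) t)
    (lstar : ℝ) (hlstar : m < lstar)
    {Ω : Type*} [MeasurableSpace Ω] (μ : Measure Ω) (h : Ω → ℝ)
    (h_meas : Measurable h) (h_nonneg : ∀ x, 0 ≤ h x)
    (h_int : Integrable (fun x => if h x = 0 then 0 else φ (h x) * h x ^ 2) μ)
    (h_pos : 0 < ∫ x, (if h x = 0 then 0 else φ (h x) * h x ^ 2) ∂μ)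
    (B : ℝ) (hB : 0 < B) :
    (∀ t > 0, Integrable (fun x => if h x = 0 then 0 else φ (t * h x) * h x ^ 2) μ) ∧
    (∃! ttil : ℝ, 0 < ttil ∧
      StrictMonoOn (mh φ μ h lstar B) (Set.Ioc 0 ttil) ∧
      StrictAntiOn (mh φ μ h lstar B) (Set.Ici ttil) ∧
      0 < mh φ μ h lstar B ttil) ∧
    Tendsto (mh φ μ h lstar B) (nhdsWithin 0 (Set.Ioi 0)) (nhds 0) ∧
    Tendsto (mh φ μ h lstar B) atTop atBot := by
  have hΦ := (show ContDiffOn ℝ 2 (fun s => s * φ s) (Ioi 0) from contDiffOn_id.mul hφ_C2)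
    |>.hasDerivAt_and_hasDerivAt_deriv isOpen_Ioi
  have hint_one : Integrable (fun x => h x * φ (h x) * h x) μ :=
    h_int.congr (ae_of_all _ fun x => by simpa using mul_ite_eq_mul_mul φ 1 (h x))
  have hpos_one : 0 < scaledIntegral (fun s => s * φ s) μ h 1 :=
    h_pos.trans_eq (integral_congr_ae (ae_of_all _ fun x => by
      simpa using mul_ite_eq_mul_mul φ 1 (h x)))
  obtain ⟨hint, hpeak⟩ := exists_unique_peak_scaledIntegral (fun t ht => (hΦ ht).1)
    (fun t ht => (hΦ ht).2) hφ3 hφ1₀ (fun t ht => (mul_pos ht (hφ_pos t ht)).le) hℓ hℓm h_meas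
    h_nonneg hint_one hpos_one (p := lstar - 1) (by linarith) hB
  rw [mh_eq_scaledIntegral]
  refine ⟨fun t ht => ((hint t ht).const_mul t⁻¹).congr (ae_of_all _ fun x => ?_), hpeak⟩
  simp only [← mul_ite_eq_mul_mul, inv_mul_cancel_left₀ ht.ne']

/-- all the integrals `∫_Ω φ(t h) h² dμ` (for `t > 0`) are finite, and there is
a unique `t̃ > 0` such that `m_h` is strictly increasing on `(0, t̃]` and strictly
decreasing on `[t̃, ∞)`; moreover `m_h(t̃) > 0`, `m_h(t) → 0` as `t → 0⁺`, and
`m_h(t) → −∞` as `t → ∞`. -/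
theorem stmt_9 (φ : ℝ → ℝ) (ℓ m : ℝ)
    (hφ_pos : ∀ t > 0, 0 < φ t)
    (hφ_C2 : ContDiffOn ℝ 2 φ (Set.Ioi 0))
    (hℓ : 1 < ℓ) (hℓm : ℓ ≤ m)
    (hφ1₀ : Tendsto (fun t => t * φ t) (nhdsWithin 0 (Set.Ioi 0)) (nhds 0))
    (hφ1top : Tendsto (fun t => t * φ t) atTop atTop)
    (hφ2 : StrictMonoOn (fun t => t * φ t) (Set.Ioi 0))
    (hφ3 : ∀ t > 0,
      (ℓ - 2) * deriv (fun s => s * φ s) t ≤ t * deriv (deriv (fun s => s * φ s)) t ∧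
      t * deriv (deriv (fun s => s * φ s)) t ≤ (m - 2) * deriv (fun s => s * φ s) t)
    (lstar : ℝ) (hlstar : m < lstar)
    {Ω : Type*} [MeasurableSpace Ω] (μ : Measure Ω) (h : Ω → ℝ)
    (h_meas : Measurable h) (h_nonneg : ∀ x, 0 ≤ h x)
    (h_int : Integrable (fun x => if h x = 0 then 0 else φ (h x) * h x ^ 2) μ)
    (h_pos : 0 < ∫ x, (if h x = 0 then 0 else φ (h x) * h x ^ 2) ∂μ)
    (B : ℝ) (hB : 0 < B) :
    (∀ t > 0, Integrable (fun x => if h x = 0 then 0 else φ (t * h x) * h x ^ 2) μ) ∧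
    (∃! ttil : ℝ, 0 < ttil ∧
      StrictMonoOn (mh φ μ h lstar B) (Set.Ioc 0 ttil) ∧
      StrictAntiOn (mh φ μ h lstar B) (Set.Ici ttil) ∧
      0 < mh φ μ h lstar B ttil) ∧
    Tendsto (mh φ μ h lstar B) (nhdsWithin 0 (Set.Ioi 0)) (nhds 0) ∧
    Tendsto (mh φ μ h lstar B) atTop atBot :=
  stmt_9_general φ ℓ m hφ_pos hφ_C2 hℓ hℓm hφ1₀ hφ3 lstar hlstar μ h h_meas h_nonneg h_int h_pos B
    hB
end

section
/- For every t > 0 the integrals ∫_Ω φ(t h) h² dμ and ∫_Ω φ′(t h) h³ dμ are absolutely convergent, and the function η(t) = t^{2−ℓ*}·∫_Ω φ(t h) h² dμ + t^{3−ℓ*}·∫_Ω φ′(t h) h³ dμ is strictly decreasing on (0,∞), with η(t) → +∞ as t → 0⁺ and η(t) → 0 as t → ∞. -/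
open Filter Set MeasureTheory Topology

/-!
Write `g t = t φ(t)`. Condition (φ3) says that `t ^ (2 - ℓ) g'(t)` is nondecreasing and
`t ^ (2 - m) g'(t)` is nonincreasing; with `g(0⁺) = 0` this yields
`(ℓ - 1) φ ≤ g' ≤ (m - 1) φ`. Since `φ(th) h² + t φ'(th) h³ = g'(th) h²`, we get
`η(t) = t ^ (m - ℓ*) J(t)` with `J(t) = t ^ (2 - m) ∫ g'(th) h² dμ`, which is nonincreasing and
positive, and the same scaling bounds on `g'` make all the integrals finite. As `m < ℓ*`, the
factor `t ^ (m - ℓ*)` makes `η` strictly decreasing, with the limits `+∞` at `0⁺` and `0` at `∞`.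
-/

lemma hasDerivAt_of_contDiffOn_Ioi {f : ℝ → ℝ} {n : WithTop ℕ∞} (hf : ContDiffOn ℝ n f (Ioi 0))
    (hn : n ≠ 0) {t : ℝ} (ht : 0 < t) : HasDerivAt f (deriv f t) t :=
  ((hf.contDiffAt (Ioi_mem_nhds ht)).differentiableAt hn).hasDerivAt

lemma HasDerivAt.nonneg_of_monotoneOn_Ioi {g : ℝ → ℝ} {g' t : ℝ} (hd : HasDerivAt g g' t)
    (hg : MonotoneOn g (Ioi 0)) (ht : 0 < t) : 0 ≤ g' :=
  (hd.hasDerivWithinAt (s := Ioi t)).nonneg_of_monotoneOn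
    (accPt_principal_iff_nhdsWithin.2 (by simpa using (inferInstance : (𝓝[>] t).NeBot)))
    (hg.mono (Ioi_subset_Ioi ht.le))

lemma monotoneOn_Ioi_of_hasDerivAt_nonneg {f f' : ℝ → ℝ} (hf : ∀ t > 0, HasDerivAt f (f' t) t)
    (hf' : ∀ t > 0, 0 ≤ f' t) : MonotoneOn f (Ioi 0) := by
  refine monotoneOn_of_hasDerivWithinAt_nonneg (f' := f') (convex_Ioi 0)
    (fun t ht => (hf t ht).continuousAt.continuousWithinAt) ?_ ?_ <;> rw [interior_Ioi]
  · exact fun t ht => (hf t ht).hasDerivWithinAt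
  · exact hf'

lemma monotoneOn_rpow_mul_of_hasDerivAt {f f' : ℝ → ℝ} {c : ℝ} (hf : ∀ t > 0, HasDerivAt f (f' t) t)
    (h : ∀ t > 0, 0 ≤ t * f' t + c * f t) : MonotoneOn (fun t => t ^ c * f t) (Ioi 0) := by
  refine monotoneOn_Ioi_of_hasDerivAt_nonneg
    (fun t ht => (Real.hasDerivAt_rpow_const (Or.inl ht.ne')).mul (hf t ht)) fun t ht => ?_
  have hpow : t ^ c = t ^ (c - 1) * t := by
    rw [← Real.rpow_add_one ht.ne', sub_add_cancel]
  calc (0 : ℝ) ≤ t ^ (c - 1) * (t * f' t + c * f t) := mul_nonneg (by positivity) (h t ht)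
    _ = _ := by rw [hpow]; ring

lemma antitoneOn_rpow_mul_of_hasDerivAt {f f' : ℝ → ℝ} {c : ℝ} (hf : ∀ t > 0, HasDerivAt f (f' t) t)
    (h : ∀ t > 0, t * f' t + c * f t ≤ 0) : AntitoneOn (fun t => t ^ c * f t) (Ioi 0) := by
  intro a ha b hb hab
  have := monotoneOn_rpow_mul_of_hasDerivAt (f := fun t => -f t) (c := c)
    (fun t ht => (hf t ht).neg) (fun t ht => by linarith [h t ht]) ha hb hab
  simpa only [mul_neg, neg_le_neg_iff] using this

lemma MonotoneOn.rpow_mul_comp_mul_sq {k : ℝ → ℝ} {c a : ℝ}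
    (hk : MonotoneOn (fun s => s ^ c * k s) (Ioi 0)) (ha : 0 ≤ a) :
    MonotoneOn (fun t => t ^ c * (k (t * a) * a ^ 2)) (Ioi 0) := by
  rcases ha.eq_or_lt with rfl | ha
  · simpa using monotoneOn_const
  intro t ht u hu htu
  have key := hk (mul_pos ht ha) (mul_pos hu ha) (by gcongr)
  simp only [Real.mul_rpow ht.le ha.le, Real.mul_rpow hu.le ha.le, mul_right_comm _ (a ^ c)] at key
  simpa only [mul_assoc] using
    mul_le_mul_of_nonneg_right (le_of_mul_le_mul_right key (by positivity)) (sq_nonneg a)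

lemma AntitoneOn.rpow_mul_comp_mul_sq {k : ℝ → ℝ} {c a : ℝ}
    (hk : AntitoneOn (fun s => s ^ c * k s) (Ioi 0)) (ha : 0 ≤ a) :
    AntitoneOn (fun t => t ^ c * (k (t * a) * a ^ 2)) (Ioi 0) := by
  intro t ht u hu htu
  have := MonotoneOn.rpow_mul_comp_mul_sq (k := -k)
    (fun s hs r hr hsr => by simpa using hk hs hr hsr) ha ht hu htu
  simpa only [Pi.neg_apply, neg_mul, mul_neg, neg_le_neg_iff] using this

lemma MonotoneOn.nonneg_of_tendsto_nhdsGT {u : ℝ → ℝ} (hu : MonotoneOn u (Ioi 0))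
    (hu0 : Tendsto u (𝓝[>] 0) (𝓝 0)) {t : ℝ} (ht : 0 < t) : 0 ≤ u t :=
  le_of_tendsto hu0 (by filter_upwards [Ioo_mem_nhdsGT ht] with s hs using hu hs.1 ht hs.2.le)

lemma tendsto_mul_nhdsGT_zero_of_monotoneOn {k : ℝ → ℝ} {c : ℝ} (hc : c < 1)
    (hk : ∀ t > 0, 0 ≤ k t) (hmono : MonotoneOn (fun t => t ^ c * k t) (Ioi 0)) :
    Tendsto (fun t => t * k t) (𝓝[>] 0) (𝓝 0) := by
  have hlim : Tendsto (fun t : ℝ => t ^ (1 - c) * k 1) (𝓝[>] 0) (𝓝 0) := by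
    have := ((Real.continuousAt_rpow_const 0 (1 - c) (Or.inr (by linarith))).tendsto.mono_left
      (nhdsWithin_le_nhds (s := Ioi 0))).mul_const (k 1)
    simpa [Real.zero_rpow (by linarith : 1 - c ≠ 0)] using this
  refine tendsto_of_tendsto_of_tendsto_of_le_of_le' tendsto_const_nhds hlim ?_ ?_
  · filter_upwards [self_mem_nhdsWithin] with t ht using mul_nonneg (le_of_lt ht) (hk t ht)
  · filter_upwards [Ioc_mem_nhdsGT one_pos] with t ht
    have h1 : t ^ c * k t ≤ k 1 := by simpa using hmono ht.1 (mem_Ioi.2 one_pos) ht.2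
    calc t * k t = t ^ (1 - c) * (t ^ c * k t) := by
          rw [← mul_assoc, ← Real.rpow_add ht.1, sub_add_cancel, Real.rpow_one]
      _ ≤ t ^ (1 - c) * k 1 := mul_le_mul_of_nonneg_left h1 (Real.rpow_nonneg ht.1.le _)

lemma sub_one_mul_le_mul_deriv {g g' g'' : ℝ → ℝ} {ℓ : ℝ} (hg : ∀ t > 0, HasDerivAt g (g' t) t)
    (hg' : ∀ t > 0, HasDerivAt g' (g'' t) t) (hg0 : Tendsto g (𝓝[>] 0) (𝓝 0))
    (hg'0 : Tendsto (fun t => t * g' t) (𝓝[>] 0) (𝓝 0))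
    (h : ∀ t > 0, (ℓ - 2) * g' t ≤ t * g'' t) {t : ℝ} (ht : 0 < t) :
    (ℓ - 1) * g t ≤ t * g' t := by
  have hu : MonotoneOn (fun t => t * g' t - (ℓ - 1) * g t) (Ioi 0) :=
    monotoneOn_Ioi_of_hasDerivAt_nonneg
      (fun t ht => ((hasDerivAt_id' t).mul (hg' t ht)).sub ((hg t ht).const_mul (ℓ - 1)))
      fun t ht => by linarith [h t ht]
  have hu0 : Tendsto (fun t => t * g' t - (ℓ - 1) * g t) (𝓝[>] 0) (𝓝 0) := by
    simpa using hg'0.sub (hg0.const_mul (ℓ - 1))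
  linarith [hu.nonneg_of_tendsto_nhdsGT hu0 ht]

lemma mul_deriv_le_sub_one_mul {g g' g'' : ℝ → ℝ} {m : ℝ} (hg : ∀ t > 0, HasDerivAt g (g' t) t)
    (hg' : ∀ t > 0, HasDerivAt g' (g'' t) t) (hg0 : Tendsto g (𝓝[>] 0) (𝓝 0))
    (hg'0 : Tendsto (fun t => t * g' t) (𝓝[>] 0) (𝓝 0))
    (h : ∀ t > 0, t * g'' t ≤ (m - 2) * g' t) {t : ℝ} (ht : 0 < t) :
    t * g' t ≤ (m - 1) * g t := by
  have := sub_one_mul_le_mul_deriv (g := fun t => -g t) (g' := fun t => -g' t)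
    (g'' := fun t => -g'' t) (ℓ := m)
    (fun t ht => (hg t ht).neg) (fun t ht => (hg' t ht).neg) (by simpa using hg0.neg)
    (by simpa using hg'0.neg) (fun t ht => by linarith [h t ht]) ht
  linarith

lemma sub_one_mul_le_deriv_mul_self_le {φ g' g'' : ℝ → ℝ} {ℓ m : ℝ}
    (hg : ∀ t > 0, HasDerivAt (fun s => s * φ s) (g' t) t)
    (hg' : ∀ t > 0, HasDerivAt g' (g'' t) t) (hmono : MonotoneOn (fun s => s * φ s) (Ioi 0))
    (h0 : Tendsto (fun s => s * φ s) (𝓝[>] 0) (𝓝 0)) (hℓ : 1 < ℓ)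
    (h : ∀ t > 0, (ℓ - 2) * g' t ≤ t * g'' t ∧ t * g'' t ≤ (m - 2) * g' t) {t : ℝ} (ht : 0 < t) :
    (ℓ - 1) * φ t ≤ g' t ∧ g' t ≤ (m - 1) * φ t := by
  have hg'0 : Tendsto (fun t => t * g' t) (𝓝[>] 0) (𝓝 0) :=
    tendsto_mul_nhdsGT_zero_of_monotoneOn (c := 2 - ℓ) (by linarith)
      (fun t ht => (hg t ht).nonneg_of_monotoneOn_Ioi hmono ht)
      (monotoneOn_rpow_mul_of_hasDerivAt hg' fun t ht => by linarith [(h t ht).1])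
  have h1 := sub_one_mul_le_mul_deriv hg hg' h0 hg'0 (fun t ht => (h t ht).1) ht
  have h2 := mul_deriv_le_sub_one_mul hg hg' h0 hg'0 (fun t ht => (h t ht).2) ht
  exact ⟨le_of_mul_le_mul_left (by linarith) ht, le_of_mul_le_mul_left (by linarith) ht⟩

lemma comp_mul_mul_sq_le {f g : ℝ → ℝ} (hfg : ∀ s > 0, f s ≤ g s) {t a : ℝ} (ht : 0 < t)
    (ha : 0 ≤ a) : f (t * a) * a ^ 2 ≤ g (t * a) * a ^ 2 := by
  rcases ha.eq_or_lt with rfl | ha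
  · simp
  · exact mul_le_mul_of_nonneg_right (hfg _ (mul_pos ht ha)) (sq_nonneg a)

lemma comp_mul_mul_sq_nonneg {k : ℝ → ℝ} (hk : ∀ s > 0, 0 ≤ k s) {t a : ℝ} (ht : 0 < t)
    (ha : 0 ≤ a) : 0 ≤ k (t * a) * a ^ 2 := by
  simpa using comp_mul_mul_sq_le (f := 0) hk ht ha

lemma deriv_mul_self_comp_mul_mul_sq {φ : ℝ → ℝ} (hφ : ∀ s > 0, HasDerivAt φ (deriv φ s) s)
    {t a : ℝ} (ht : 0 < t) (ha : 0 ≤ a) :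
    deriv (fun s => s * φ s) (t * a) * a ^ 2 =
      φ (t * a) * a ^ 2 + t * (deriv φ (t * a) * a ^ 3) := by
  rcases ha.eq_or_lt with rfl | ha
  · simp
  · have hd : HasDerivAt (fun s => s * φ s) (1 * φ (t * a) + t * a * deriv φ (t * a)) (t * a) :=
      (hasDerivAt_id' _).mul (hφ _ (mul_pos ht ha))
    rw [hd.deriv]
    ring

lemma pos_of_monotoneOn_rpow_mul_of_antitoneOn_rpow_mul {I : ℝ → ℝ} {c d t : ℝ}
    (hc : MonotoneOn (fun t => t ^ c * I t) (Ioi 0))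
    (hd : AntitoneOn (fun t => t ^ d * I t) (Ioi 0)) (h1 : 0 < I 1) (ht : 0 < t) : 0 < I t := by
  rcases le_total 1 t with h | h
  · have := hc (mem_Ioi.2 one_pos) ht h
    simp only [Real.one_rpow, one_mul] at this
    exact pos_of_mul_pos_right (h1.trans_le this) (Real.rpow_nonneg ht.le _)
  · have := hd ht (mem_Ioi.2 one_pos) h
    simp only [Real.one_rpow, one_mul] at this
    exact pos_of_mul_pos_right (h1.trans_le this) (Real.rpow_nonneg ht.le _)

lemma strictAntiOn_rpow_mul {J : ℝ → ℝ} {a : ℝ} (ha : a < 0) (hJ : AntitoneOn J (Ioi 0))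
    (hJ_pos : ∀ t > 0, 0 < J t) : StrictAntiOn (fun t => t ^ a * J t) (Ioi 0) := by
  intro s hs t ht hst
  calc t ^ a * J t ≤ t ^ a * J s :=
        mul_le_mul_of_nonneg_left (hJ hs ht hst.le) (Real.rpow_nonneg (le_of_lt ht) _)
    _ < s ^ a * J s := mul_lt_mul_of_pos_right (Real.rpow_lt_rpow_of_neg hs hst ha) (hJ_pos s hs)

lemma tendsto_rpow_mul_nhdsGT_zero {J : ℝ → ℝ} {a : ℝ} (ha : a < 0) (hJ : AntitoneOn J (Ioi 0))
    (hJ1 : 0 < J 1) : Tendsto (fun t => t ^ a * J t) (𝓝[>] 0) atTop :=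
  tendsto_atTop_mono' _
    (by filter_upwards [Ioc_mem_nhdsGT one_pos] with t ht using
      mul_le_mul_of_nonneg_left (hJ ht.1 (mem_Ioi.2 one_pos) ht.2) (Real.rpow_nonneg ht.1.le _))
    ((tendsto_rpow_neg_nhdsGT_zero ha).atTop_mul_const hJ1)

lemma tendsto_rpow_mul_atTop {J : ℝ → ℝ} {a : ℝ} (ha : a < 0) (hJ : AntitoneOn J (Ioi 0))
    (hJ_nonneg : ∀ t > 0, 0 ≤ J t) : Tendsto (fun t => t ^ a * J t) atTop (𝓝 0) := by
  have hlim : Tendsto (fun t : ℝ => t ^ a * J 1) atTop (𝓝 0) := by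
    simpa using (tendsto_rpow_neg_atTop (y := -a) (by linarith)).mul_const (J 1)
  refine tendsto_of_tendsto_of_tendsto_of_le_of_le' tendsto_const_nhds hlim ?_ ?_ <;>
    filter_upwards [eventually_ge_atTop 1] with t ht
  · exact mul_nonneg (Real.rpow_nonneg (by linarith) _) (hJ_nonneg t (by linarith))
  · exact mul_le_mul_of_nonneg_left (hJ (mem_Ioi.2 one_pos) (mem_Ioi.2 (by linarith)) ht)
      (Real.rpow_nonneg (by linarith) _)

lemma ite_eq_mul_pow {a b : ℝ} {n : ℕ} [Decidable (a = 0)] (hn : n ≠ 0) :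
    (if a = 0 then 0 else b * a ^ n) = b * a ^ n := by
  split_ifs with ha <;> simp [ha, hn]

section

variable {Ω : Type*} [MeasurableSpace Ω] {μ : Measure Ω}

lemma monotoneOn_mul_integral {s : Set ℝ} {w : ℝ → ℝ} {F : ℝ → Ω → ℝ}
    (hF : ∀ t ∈ s, Integrable (F t) μ) (hmono : ∀ x, MonotoneOn (fun t => w t * F t x) s) :
    MonotoneOn (fun t => w t * ∫ x, F t x ∂μ) s := by
  intro a ha b hb hab
  simp only [← integral_const_mul]
  exact integral_mono ((hF a ha).const_mul _) ((hF b hb).const_mul _) fun x => hmono x ha hb hab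

lemma antitoneOn_mul_integral {s : Set ℝ} {w : ℝ → ℝ} {F : ℝ → Ω → ℝ}
    (hF : ∀ t ∈ s, Integrable (F t) μ) (hanti : ∀ x, AntitoneOn (fun t => w t * F t x) s) :
    AntitoneOn (fun t => w t * ∫ x, F t x ∂μ) s := by
  intro a ha b hb hab
  simp only [← integral_const_mul]
  exact integral_mono ((hF b hb).const_mul _) ((hF a ha).const_mul _) fun x => hanti x ha hb hab

variable {h : Ω → ℝ}

lemma integrable_comp_mul_mul_sq {k : ℝ → ℝ} {c d t : ℝ} (hk : Measurable k)
    (hh : Measurable h) (h_nonneg : ∀ x, 0 ≤ h x) (hk_nonneg : ∀ s > 0, 0 ≤ k s)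
    (hmono : MonotoneOn (fun s => s ^ c * k s) (Ioi 0))
    (hanti : AntitoneOn (fun s => s ^ d * k s) (Ioi 0))
    (hint : Integrable (fun x => k (h x) * h x ^ 2) μ) (ht : 0 < t) :
    Integrable (fun x => k (t * h x) * h x ^ 2) μ := by
  refine (hint.const_mul (max (t ^ c)⁻¹ (t ^ d)⁻¹)).mono'
    ((hk.comp (hh.const_mul t)).mul (hh.pow_const 2)).aestronglyMeasurable
    (Eventually.of_forall fun x => ?_)
  have h1 : 0 ≤ k (h x) * h x ^ 2 := by
    simpa using comp_mul_mul_sq_nonneg hk_nonneg one_pos (h_nonneg x)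
  rw [Real.norm_of_nonneg (comp_mul_mul_sq_nonneg hk_nonneg ht (h_nonneg x))]
  rcases le_total t 1 with ht1 | ht1
  · have := hmono.rpow_mul_comp_mul_sq (h_nonneg x) ht (mem_Ioi.2 one_pos) ht1
    simp only [Real.one_rpow, one_mul] at this
    exact ((le_inv_mul_iff₀ (by positivity)).2 this).trans
      (mul_le_mul_of_nonneg_right (le_max_left _ _) h1)
  · have := hanti.rpow_mul_comp_mul_sq (h_nonneg x) (mem_Ioi.2 one_pos) ht ht1
    simp only [Real.one_rpow, one_mul] at this
    exact ((le_inv_mul_iff₀ (by positivity)).2 this).trans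
      (mul_le_mul_of_nonneg_right (le_max_right _ _) h1)

variable {φ : ℝ → ℝ} {t : ℝ}

lemma integrable_comp_mul_mul_pow_of_integrable_deriv {ℓ : ℝ}
    (hφ : ∀ s > 0, HasDerivAt φ (deriv φ s) s) (hφ_pos : ∀ s > 0, 0 < φ s) (hℓ : 1 < ℓ)
    (hle : ∀ s > 0, (ℓ - 1) * φ s ≤ deriv (fun s => s * φ s) s) (hh : Measurable h)
    (h_nonneg : ∀ x, 0 ≤ h x) (ht : 0 < t)
    (hF : Integrable (fun x => deriv (fun s => s * φ s) (t * h x) * h x ^ 2) μ) :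
    Integrable (fun x => φ (t * h x) * h x ^ 2) μ ∧
      Integrable (fun x => deriv φ (t * h x) * h x ^ 3) μ := by
  have hsplit := fun x => deriv_mul_self_comp_mul_mul_sq hφ ht (h_nonneg x)
  -- `φ` is only continuous on `(0, ∞)`, so measurability comes from `g' - t φ'` instead.
  have hP_meas : AEStronglyMeasurable (fun x => φ (t * h x) * h x ^ 2) μ :=
    (hF.aestronglyMeasurable.sub
      ((((measurable_deriv φ).comp (hh.const_mul t)).mul (hh.pow_const 3)).const_mul t
        ).aestronglyMeasurable).congr
      (Eventually.of_forall fun x => (eq_sub_of_add_eq (hsplit x).symm).symm)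
  have hP : Integrable (fun x => φ (t * h x) * h x ^ 2) μ := by
    refine (hF.const_mul (ℓ - 1)⁻¹).mono' hP_meas (Eventually.of_forall fun x => ?_)
    rw [Real.norm_of_nonneg (comp_mul_mul_sq_nonneg (fun s hs => (hφ_pos s hs).le) ht (h_nonneg x)),
      le_inv_mul_iff₀ (by linarith)]
    simpa only [mul_assoc] using comp_mul_mul_sq_le hle ht (h_nonneg x)
  refine ⟨hP, ((hF.sub hP).div_const t).congr (Eventually.of_forall fun x => ?_)⟩
  simp only [Pi.sub_apply, hsplit x]
  field_simp
  ring

lemma integral_deriv_mul_self_comp_mul_mul_sq (hφ : ∀ s > 0, HasDerivAt φ (deriv φ s) s)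
    (h_nonneg : ∀ x, 0 ≤ h x) (ht : 0 < t)
    (hP : Integrable (fun x => φ (t * h x) * h x ^ 2) μ)
    (hQ : Integrable (fun x => deriv φ (t * h x) * h x ^ 3) μ) :
    ∫ x, deriv (fun s => s * φ s) (t * h x) * h x ^ 2 ∂μ =
      ∫ x, φ (t * h x) * h x ^ 2 ∂μ + t * ∫ x, deriv φ (t * h x) * h x ^ 3 ∂μ := by
  rw [← integral_const_mul, ← integral_add hP (hQ.const_mul t)]
  exact integral_congr_ae
    (Eventually.of_forall fun x => deriv_mul_self_comp_mul_mul_sq hφ ht (h_nonneg x))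

lemma integrable_comp_mul_sq_of_le {k f : ℝ → ℝ} {C : ℝ} (hk : Measurable k) (hh : Measurable h)
    (h_nonneg : ∀ x, 0 ≤ h x) (hk_nonneg : ∀ s > 0, 0 ≤ k s) (hle : ∀ s > 0, k s ≤ C * f s)
    (hf : Integrable (fun x => f (h x) * h x ^ 2) μ) :
    Integrable (fun x => k (h x) * h x ^ 2) μ :=
  (hf.const_mul C).mono' ((hk.comp hh).mul (hh.pow_const 2)).aestronglyMeasurable
    (Eventually.of_forall fun x => by
      rw [Real.norm_of_nonneg
        (by simpa using comp_mul_mul_sq_nonneg hk_nonneg one_pos (h_nonneg x)), ← mul_assoc]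
      simpa using comp_mul_mul_sq_le hle one_pos (h_nonneg x))

lemma integral_comp_mul_sq_pos_of_le {k f : ℝ → ℝ} {C : ℝ} (hC : 0 < C) (h_nonneg : ∀ x, 0 ≤ h x)
    (hle : ∀ s > 0, C * f s ≤ k s) (hf : Integrable (fun x => f (h x) * h x ^ 2) μ)
    (hk : Integrable (fun x => k (h x) * h x ^ 2) μ) (hf_pos : 0 < ∫ x, f (h x) * h x ^ 2 ∂μ) :
    0 < ∫ x, k (h x) * h x ^ 2 ∂μ := by
  refine (mul_pos hC hf_pos).trans_le ?_
  rw [← integral_const_mul]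
  refine integral_mono (hf.const_mul _) hk fun x => ?_
  simpa [mul_assoc] using comp_mul_mul_sq_le hle one_pos (h_nonneg x)

lemma rpow_mul_integral_add_rpow_mul_integral (hφ : ∀ s > 0, HasDerivAt φ (deriv φ s) s)
    (h_nonneg : ∀ x, 0 ≤ h x) (ht : 0 < t)
    (hP : Integrable (fun x => φ (t * h x) * h x ^ 2) μ)
    (hQ : Integrable (fun x => deriv φ (t * h x) * h x ^ 3) μ) (a b : ℝ) :
    t ^ (2 - b) * ∫ x, φ (t * h x) * h x ^ 2 ∂μ +
        t ^ (3 - b) * ∫ x, deriv φ (t * h x) * h x ^ 3 ∂μ =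
      t ^ (a - b) * (t ^ (2 - a) * ∫ x, deriv (fun s => s * φ s) (t * h x) * h x ^ 2 ∂μ) := by
  have h3 : t ^ (3 - b) = t ^ (2 - b) * t := by
    rw [← Real.rpow_add_one ht.ne']; ring_nf
  have h2 : t ^ (2 - b) = t ^ (a - b) * t ^ (2 - a) := by
    rw [← Real.rpow_add ht]; ring_nf
  rw [integral_deriv_mul_self_comp_mul_mul_sq hφ h_nonneg ht hP hQ, h3, h2]
  ring

end

theorem stmt_11_general (φ : ℝ → ℝ) (ℓ m : ℝ)
    (hφ_pos : ∀ t > 0, 0 < φ t)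
    (hφ_C2 : ContDiffOn ℝ 2 φ (Set.Ioi 0))
    (hℓ : 1 < ℓ)
    (hφ1₀ : Tendsto (fun t => t * φ t) (nhdsWithin 0 (Set.Ioi 0)) (nhds 0))
    (hφ2 : StrictMonoOn (fun t => t * φ t) (Set.Ioi 0))
    (hφ3 : ∀ t > 0,
      (ℓ - 2) * deriv (fun s => s * φ s) t ≤ t * deriv (deriv (fun s => s * φ s)) t ∧
      t * deriv (deriv (fun s => s * φ s)) t ≤ (m - 2) * deriv (fun s => s * φ s) t)
    (lstar : ℝ) (hlstar : m < lstar)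
    {Ω : Type*} [MeasurableSpace Ω] (μ : Measure Ω) (h : Ω → ℝ)
    (h_meas : Measurable h) (h_nonneg : ∀ x, 0 ≤ h x)
    (h_int : Integrable (fun x => if h x = 0 then 0 else φ (h x) * h x ^ 2) μ)
    (h_pos : 0 < ∫ x, (if h x = 0 then 0 else φ (h x) * h x ^ 2) ∂μ)
    (η : ℝ → ℝ)
    (hη : ∀ t, η t =
      t ^ ((2:ℝ) - lstar) * (∫ x, (if h x = 0 then 0 else φ (t * h x) * h x ^ 2) ∂μ) +
      t ^ ((3:ℝ) - lstar) * (∫ x, (if h x = 0 then 0 else deriv φ (t * h x) * h x ^ 3) ∂μ)) :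
    (∀ t > 0,
      Integrable (fun x => if h x = 0 then 0 else φ (t * h x) * h x ^ 2) μ ∧
      Integrable (fun x => if h x = 0 then 0 else deriv φ (t * h x) * h x ^ 3) μ) ∧
    StrictAntiOn η (Set.Ioi 0) ∧
    Tendsto η (nhdsWithin 0 (Set.Ioi 0)) atTop ∧
    Tendsto η atTop (nhds 0) := by
  simp_rw [ite_eq_mul_pow two_ne_zero, ite_eq_mul_pow three_ne_zero] at h_int h_pos hη ⊢
  set g : ℝ → ℝ := fun s => s * φ s
  have hgC2 : ContDiffOn ℝ 2 g (Ioi 0) := contDiffOn_id.mul hφ_C2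
  have hφ' (t) := hasDerivAt_of_contDiffOn_Ioi hφ_C2 two_ne_zero (t := t)
  have hg' (t) := hasDerivAt_of_contDiffOn_Ioi hgC2 two_ne_zero (t := t)
  have hg'' (t) := hasDerivAt_of_contDiffOn_Ioi (hgC2.deriv_of_isOpen isOpen_Ioi le_rfl)
    one_ne_zero (t := t)
  have hbounds (t) := sub_one_mul_le_deriv_mul_self_le hg' hg'' hφ2.monotoneOn hφ1₀ hℓ hφ3 (t := t)
  have hg'_nonneg (s) (hs : 0 < s) : 0 ≤ deriv g s :=
    (mul_nonneg (by linarith) (hφ_pos s hs).le).trans (hbounds s hs).1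
  have hmono := monotoneOn_rpow_mul_of_hasDerivAt (c := 2 - ℓ) hg'' fun t ht => by
    linarith [(hφ3 t ht).1]
  have hanti := antitoneOn_rpow_mul_of_hasDerivAt (c := 2 - m) hg'' fun t ht => by
    linarith [(hφ3 t ht).2]
  have hF (t) (ht : 0 < t) := integrable_comp_mul_mul_sq (measurable_deriv g) h_meas h_nonneg
    hg'_nonneg hmono hanti (integrable_comp_mul_sq_of_le (measurable_deriv g) h_meas h_nonneg
      hg'_nonneg (fun s hs => (hbounds s hs).2) h_int) ht
  have hPQ (t) (ht : 0 < t) := integrable_comp_mul_mul_pow_of_integrable_deriv hφ' hφ_pos hℓ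
    (fun s hs => (hbounds s hs).1) h_meas h_nonneg ht (hF t ht)
  set J := fun t => t ^ (2 - m) * ∫ x, deriv g (t * h x) * h x ^ 2 ∂μ
  have hJ_anti : AntitoneOn J (Ioi 0) :=
    antitoneOn_mul_integral hF fun x => hanti.rpow_mul_comp_mul_sq (h_nonneg x)
  have hI1 : 0 < ∫ x, deriv g (1 * h x) * h x ^ 2 ∂μ := by
    simpa using integral_comp_mul_sq_pos_of_le (sub_pos.2 hℓ) h_nonneg
      (fun s hs => (hbounds s hs).1) h_int (by simpa using hF 1 one_pos) h_pos
  have hJ_pos (t) (ht : 0 < t) : 0 < J t := mul_pos (Real.rpow_pos_of_pos ht _)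
    (pos_of_monotoneOn_rpow_mul_of_antitoneOn_rpow_mul
      (monotoneOn_mul_integral hF fun x => hmono.rpow_mul_comp_mul_sq (h_nonneg x)) hJ_anti hI1 ht)
  have hηJ : EqOn η (fun t => t ^ (m - lstar) * J t) (Ioi 0) := fun t ht => by
    rw [hη]
    exact rpow_mul_integral_add_rpow_mul_integral hφ' h_nonneg ht (hPQ t ht).1 (hPQ t ht).2 m lstar
  have ha : m - lstar < 0 := by linarith
  exact ⟨hPQ, (strictAntiOn_rpow_mul ha hJ_anti hJ_pos).congr hηJ.symm,
    (tendsto_rpow_mul_nhdsGT_zero ha hJ_anti (hJ_pos 1 one_pos)).congr'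
      (eventuallyEq_of_mem self_mem_nhdsWithin hηJ).symm,
    (tendsto_rpow_mul_atTop ha hJ_anti fun t ht => (hJ_pos t ht).le).congr'
      (eventuallyEq_of_mem (Ioi_mem_atTop 0) hηJ).symm⟩

/-- for every `t > 0` the integrals `∫_Ω φ(t h) h² dμ` and `∫_Ω φ′(t h) h³ dμ`
are absolutely convergent, and
`η(t) = t^{2−ℓ*}·∫_Ω φ(t h) h² dμ + t^{3−ℓ*}·∫_Ω φ′(t h) h³ dμ` is strictly decreasing on
`(0,∞)`, with `η(t) → +∞` as `t → 0⁺` and `η(t) → 0` as `t → ∞`. -/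
theorem stmt_11 (φ : ℝ → ℝ) (ℓ m : ℝ)
    (hφ_pos : ∀ t > 0, 0 < φ t)
    (hφ_C2 : ContDiffOn ℝ 2 φ (Set.Ioi 0))
    (hℓ : 1 < ℓ) (hℓm : ℓ ≤ m)
    (hφ1₀ : Tendsto (fun t => t * φ t) (nhdsWithin 0 (Set.Ioi 0)) (nhds 0))
    (hφ1top : Tendsto (fun t => t * φ t) atTop atTop)
    (hφ2 : StrictMonoOn (fun t => t * φ t) (Set.Ioi 0))
    (hφ3 : ∀ t > 0,
      (ℓ - 2) * deriv (fun s => s * φ s) t ≤ t * deriv (deriv (fun s => s * φ s)) t ∧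
      t * deriv (deriv (fun s => s * φ s)) t ≤ (m - 2) * deriv (fun s => s * φ s) t)
    (lstar : ℝ) (hlstar : m < lstar)
    {Ω : Type*} [MeasurableSpace Ω] (μ : Measure Ω) (h : Ω → ℝ)
    (h_meas : Measurable h) (h_nonneg : ∀ x, 0 ≤ h x)
    (h_int : Integrable (fun x => if h x = 0 then 0 else φ (h x) * h x ^ 2) μ)
    (h_pos : 0 < ∫ x, (if h x = 0 then 0 else φ (h x) * h x ^ 2) ∂μ)
    (η : ℝ → ℝ)
    (hη : ∀ t, η t =
      t ^ ((2:ℝ) - lstar) * (∫ x, (if h x = 0 then 0 else φ (t * h x) * h x ^ 2) ∂μ) +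
      t ^ ((3:ℝ) - lstar) * (∫ x, (if h x = 0 then 0 else deriv φ (t * h x) * h x ^ 3) ∂μ)) :
    (∀ t > 0,
      Integrable (fun x => if h x = 0 then 0 else φ (t * h x) * h x ^ 2) μ ∧
      Integrable (fun x => if h x = 0 then 0 else deriv φ (t * h x) * h x ^ 3) μ) ∧
    StrictAntiOn η (Set.Ioi 0) ∧
    Tendsto η (nhdsWithin 0 (Set.Ioi 0)) atTop ∧
    Tendsto η atTop (nhds 0) :=
  stmt_11_general φ ℓ m hφ_pos hφ_C2 hℓ hφ1₀ hφ2 hφ3 lstar hlstar μ h h_meas h_nonneg h_int h_pos η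
    hη
end

section
/- For all ρ, t > 0 the Sobolev conjugate satisfies min{t^{ℓ*}, t^{m*}}·Φ*(ρ) ≤ Φ*(ρt) ≤ max{t^{ℓ*}, t^{m*}}·Φ*(ρ). -/
/-!
Write `ψ t = t φ t`. Condition (φ3) says that `t ψ' - (ℓ - 1) ψ` and `(m - 1) ψ - t ψ'` are
nondecreasing; since `ψ (0+) = 0` they are nonnegative (otherwise `ψ` would stay away from `0`
near `0`). Hence `(ℓ - 1) ψ ≤ t ψ' ≤ (m - 1) ψ`, and `ψ (ρ t) / ψ ρ` lies between
`t ^ (ℓ - 1)` and `t ^ (m - 1)` for `t ≥ 1`. Such two-sided power bounds pass to primitives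
(exponents `+ 1`), to products with `s ^ e` (exponents `+ e`) and to inverses of increasing
functions (exponents inverted and swapped). Following `ψ → Φ → Φ⁻¹ → G → Φ* = G⁻¹` the exponents
become `(ℓ⁻¹ - N⁻¹)⁻¹ = ℓ*` and `(m⁻¹ - N⁻¹)⁻¹ = m*`; `m < N` is what makes
`Φ⁻¹(s) s^(-(N+1)/N) ≲ s ^ (m⁻¹ - 1 - N⁻¹)` integrable at `0`.
-/

open Filter Set MeasureTheory

/-- `G(t) = ∫₀ᵗ Φ⁻¹(s)·s^{−(N+1)/N} ds`, whose inverse is the Sobolev conjugate `Φ*`. -/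
noncomputable def sobG (Phinv : ℝ → ℝ) (N t : ℝ) : ℝ :=
  ∫ s in (0:ℝ)..t, Phinv s * s ^ (-(N + 1) / N)

open Topology

lemma hasDerivAt_mul_rpow_neg {f : ℝ → ℝ} {f' p x : ℝ} (hx : 0 < x) (hf : HasDerivAt f f' x) :
    HasDerivAt (fun y => f y * y ^ (-p)) ((x * f' - p * f x) * x ^ (-p - 1)) x := by
  have hpow : x ^ (-p) = x * x ^ (-p - 1) := by
    conv_lhs => rw [show -p = 1 + (-p - 1) by ring, Real.rpow_add hx, Real.rpow_one]
  refine (hf.mul (Real.hasDerivAt_rpow_const (Or.inl hx.ne'))).congr_deriv ?_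
  rw [hpow]
  ring

lemma monotoneOn_mul_rpow_neg {f f' : ℝ → ℝ} {p : ℝ} {s : Set ℝ} (hs : Convex ℝ s)
    (hs0 : s ⊆ Ioi 0) (hf : ∀ x ∈ s, HasDerivAt f (f' x) x)
    (h : ∀ x ∈ s, p * f x ≤ x * f' x) : MonotoneOn (fun x => f x * x ^ (-p)) s := by
  have hderiv x (hx : x ∈ s) := hasDerivAt_mul_rpow_neg (p := p) (hs0 hx) (hf x hx)
  refine monotoneOn_of_hasDerivWithinAt_nonneg hs
    (fun x hx => (hderiv x hx).continuousAt.continuousWithinAt)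
    (fun x hx => (hderiv x (interior_subset hx)).hasDerivWithinAt) fun x hx => ?_
  have hx := interior_subset hx
  exact mul_nonneg (sub_nonneg.2 (h x hx)) (Real.rpow_nonneg (hs0 hx).le _)

lemma antitoneOn_mul_rpow_neg {f f' : ℝ → ℝ} {q : ℝ} {s : Set ℝ} (hs : Convex ℝ s)
    (hs0 : s ⊆ Ioi 0) (hf : ∀ x ∈ s, HasDerivAt f (f' x) x)
    (h : ∀ x ∈ s, x * f' x ≤ q * f x) : AntitoneOn (fun x => f x * x ^ (-q)) s := by
  have := monotoneOn_mul_rpow_neg (f := fun x => -f x) (f' := fun x => -f' x) (p := q) hs hs0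
    (fun x hx => (hf x hx).neg) fun x hx => by linarith [h x hx]
  intro x hx y hy hxy
  simpa only [neg_mul, neg_le_neg_iff] using this hx hy hxy

lemma le_mul_deriv_of_monotoneOn {f f' : ℝ → ℝ} {p : ℝ} (hp : 0 < p)
    (hf : ∀ x ∈ Ioi (0 : ℝ), HasDerivAt f (f' x) x) (hlim : Tendsto f (𝓝[>] 0) (𝓝 0))
    (hmono : MonotoneOn (fun x => x * f' x - p * f x) (Ioi 0)) {x : ℝ} (hx : 0 < x) :
    p * f x ≤ x * f' x := by
  by_contra! hlt
  set c := p * f x - x * f' x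
  have hc : 0 < c / p := div_pos (sub_pos.2 hlt) hp
  -- On `(0, x]` monotonicity gives `y f' - p f ≤ -c`, so `(f - c/p) y^(-p)` is antitone there
  -- and `f y ≥ c/p + K y^p`, which is incompatible with `f (0+) = 0`.
  have hanti : AntitoneOn (fun y => (f y - c / p) * y ^ (-p)) (Ioc 0 x) := by
    refine antitoneOn_mul_rpow_neg (convex_Ioc 0 x) Ioc_subset_Ioi_self
      (fun y hy => (hf y hy.1).sub_const _) fun y hy => ?_
    have := hmono hy.1 hx hy.2
    rw [mul_sub, mul_div_cancel₀ _ hp.ne']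
    linarith
  set K := (f x - c / p) * x ^ (-p)
  have hbound : ∀ y ∈ Ioc 0 x, K * y ^ p + c / p ≤ f y := by
    intro y hy
    have : K ≤ (f y - c / p) * y ^ (-p) := hanti hy (right_mem_Ioc.2 hx) hy.2
    rw [Real.rpow_neg hy.1.le, ← div_eq_mul_inv, le_div_iff₀ (Real.rpow_pos_of_pos hy.1 p)] at this
    linarith
  have hpow : Tendsto (fun y : ℝ => y ^ p) (𝓝[>] 0) (𝓝 0) := by
    simpa [Real.zero_rpow hp.ne'] using
      (Real.continuousAt_rpow_const 0 p (Or.inr hp.le)).tendsto.mono_left nhdsWithin_le_nhds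
  have hlow : Tendsto (fun y => K * y ^ p + c / p) (𝓝[>] 0) (𝓝 (c / p)) := by
    simpa using (hpow.const_mul K).add_const (c / p)
  have := le_of_tendsto_of_tendsto hlow hlim <|
    eventually_of_mem (Ioc_mem_nhdsGT hx) hbound
  linarith

lemma mul_deriv_le_of_monotoneOn {f f' : ℝ → ℝ} {p : ℝ} (hp : 0 < p)
    (hf : ∀ x ∈ Ioi (0 : ℝ), HasDerivAt f (f' x) x) (hlim : Tendsto f (𝓝[>] 0) (𝓝 0))
    (hmono : MonotoneOn (fun x => p * f x - x * f' x) (Ioi 0)) {x : ℝ} (hx : 0 < x) :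
    x * f' x ≤ p * f x := by
  have := le_mul_deriv_of_monotoneOn (f := fun y => -f y) (f' := fun y => -f' y) hp
    (fun y hy => (hf y hy).neg) (by simpa using hlim.neg)
    (by convert hmono using 1; ext y; ring) hx
  linarith

lemma monotoneOn_Ioi_of_hasDerivAt_nonneg_s15 {g g' : ℝ → ℝ}
    (hg : ∀ x ∈ Ioi (0 : ℝ), HasDerivAt g (g' x) x) (h : ∀ x ∈ Ioi (0 : ℝ), 0 ≤ g' x) :
    MonotoneOn g (Ioi 0) :=
  monotoneOn_of_hasDerivWithinAt_nonneg (convex_Ioi 0)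
    (fun x hx => (hg x hx).continuousAt.continuousWithinAt)
    (fun x hx => (hg x (interior_subset hx)).hasDerivWithinAt) fun x hx => h x (interior_subset hx)

lemma euler_bounds_of_deriv {f f' f'' : ℝ → ℝ} {p q : ℝ} (hp : 0 < p) (hq : 0 < q)
    (hf : ∀ x ∈ Ioi (0 : ℝ), HasDerivAt f (f' x) x)
    (hf' : ∀ x ∈ Ioi (0 : ℝ), HasDerivAt f' (f'' x) x) (hlim : Tendsto f (𝓝[>] 0) (𝓝 0))
    (h : ∀ x > 0, (p - 1) * f' x ≤ x * f'' x ∧ x * f'' x ≤ (q - 1) * f' x) {x : ℝ} (hx : 0 < x) :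
    p * f x ≤ x * f' x ∧ x * f' x ≤ q * f x := by
  have hderiv y (hy : y ∈ Ioi (0 : ℝ)) : HasDerivAt (fun y => y * f' y) (f' y + y * f'' y) y := by
    simpa using (hasDerivAt_id' y).fun_mul (hf' y hy)
  refine ⟨le_mul_deriv_of_monotoneOn hp hf hlim ?_ hx, mul_deriv_le_of_monotoneOn hq hf hlim ?_ hx⟩
  · refine monotoneOn_Ioi_of_hasDerivAt_nonneg_s15
      (fun y hy => (hderiv y hy).sub ((hf y hy).const_mul p)) fun y hy => ?_
    linarith [(h y hy).1]
  · refine monotoneOn_Ioi_of_hasDerivAt_nonneg_s15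
      (fun y hy => ((hf y hy).const_mul q).sub (hderiv y hy)) fun y hy => ?_
    linarith [(h y hy).2]

def PowerScaling (F : ℝ → ℝ) (p q : ℝ) : Prop :=
  ∀ ρ > 0, ∀ t ≥ 1, t ^ p * F ρ ≤ F (ρ * t) ∧ F (ρ * t) ≤ t ^ q * F ρ

namespace PowerScaling

lemma of_euler_bounds {f f' : ℝ → ℝ} {p q : ℝ} (hf : ∀ x ∈ Ioi (0 : ℝ), HasDerivAt f (f' x) x)
    (h : ∀ x > 0, p * f x ≤ x * f' x ∧ x * f' x ≤ q * f x) : PowerScaling f p q := by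
  intro ρ hρ t ht
  have ht0 : 0 < t := by linarith
  have hρt : ρ ≤ ρ * t := le_mul_of_one_le_right hρ.le ht
  have hmono := monotoneOn_mul_rpow_neg (convex_Ioi 0) subset_rfl hf (fun x hx => (h x hx).1)
    hρ (hρ.trans_le hρt) hρt
  have hanti := antitoneOn_mul_rpow_neg (convex_Ioi 0) subset_rfl hf (fun x hx => (h x hx).2)
    hρ (hρ.trans_le hρt) hρt
  have hdil (a c : ℝ) : a * (ρ * t) ^ (-c) = a / t ^ c * ρ ^ (-c) := by
    rw [Real.mul_rpow hρ.le ht0.le, Real.rpow_neg ht0.le]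
    ring
  simp only [hdil] at hmono hanti
  rw [mul_le_mul_iff_left₀ (Real.rpow_pos_of_pos hρ _), le_div_iff₀ (Real.rpow_pos_of_pos ht0 _)]
    at hmono
  rw [mul_le_mul_iff_left₀ (Real.rpow_pos_of_pos hρ _), div_le_iff₀ (Real.rpow_pos_of_pos ht0 _)]
    at hanti
  constructor <;> linarith

lemma mul_rpow {g : ℝ → ℝ} {a b : ℝ} (hg : PowerScaling g a b) (e : ℝ) :
    PowerScaling (fun x => g x * x ^ e) (a + e) (b + e) := by
  intro ρ hρ t ht
  have ht0 : 0 < t := by linarith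
  have hte := Real.rpow_pos_of_pos ht0 e
  have hρe := Real.rpow_nonneg hρ.le e
  simp only [Real.mul_rpow hρ.le ht0.le, Real.rpow_add ht0]
  obtain ⟨hlow, hup⟩ := hg ρ hρ t ht
  constructor
  · calc t ^ a * t ^ e * (g ρ * ρ ^ e) = (t ^ a * g ρ) * ρ ^ e * t ^ e := by ring
      _ ≤ g (ρ * t) * ρ ^ e * t ^ e := by gcongr
      _ = _ := by ring
  · calc g (ρ * t) * (ρ ^ e * t ^ e) = g (ρ * t) * ρ ^ e * t ^ e := by ring
      _ ≤ (t ^ b * g ρ) * ρ ^ e * t ^ e := by gcongr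
      _ = _ := by ring

lemma primitive {g : ℝ → ℝ} {a b : ℝ} (hg : PowerScaling g a b)
    (hint : ∀ r ≥ 0, IntervalIntegrable g volume 0 r) :
    PowerScaling (fun x => ∫ s in (0 : ℝ)..x, g s) (a + 1) (b + 1) := by
  intro ρ hρ t ht
  have ht0 : 0 < t := by linarith
  have hdil : ∫ s in (0 : ℝ)..ρ * t, g s = t * ∫ x in (0 : ℝ)..ρ, g (x * t) := by
    rw [intervalIntegral.integral_comp_mul_right g ht0.ne', zero_mul, smul_eq_mul,
      mul_inv_cancel_left₀ ht0.ne']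
  have hint_dil : IntervalIntegrable (fun x => g (x * t)) volume 0 ρ := by
    simpa [ht0.ne'] using (hint (ρ * t) (by positivity)).comp_mul_right (c := t)
  have hint_ρ := (hint ρ hρ.le).const_mul
  have hpos x (hx : x ∈ Ioo 0 ρ) := hg x hx.1 t ht
  have hpow (c : ℝ) :
      t ^ (c + 1) * ∫ s in (0 : ℝ)..ρ, g s = t * ∫ x in (0 : ℝ)..ρ, t ^ c * g x := by
    rw [intervalIntegral.integral_const_mul, Real.rpow_add_one ht0.ne']
    ring
  dsimp only
  rw [hdil, hpow, hpow]
  constructor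
  · gcongr t * ?_
    exact intervalIntegral.integral_mono_on_of_le_Ioo hρ.le (hint_ρ _) hint_dil
      fun x hx => (hpos x hx).1
  · gcongr t * ?_
    exact intervalIntegral.integral_mono_on_of_le_Ioo hρ.le hint_dil (hint_ρ _)
      fun x hx => (hpos x hx).2

-- The lower bound at `r` gives `g x ≤ g r * (x / r) ^ a` on `(0, r]`.
lemma intervalIntegrable {g : ℝ → ℝ} {a b r : ℝ} (hg : PowerScaling g a b) (ha : -1 < a)
    (hr : 0 ≤ r) (hg0 : ∀ x > 0, 0 ≤ g x)
    (hmeas : AEStronglyMeasurable g (volume.restrict (Ioc 0 r))) :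
    IntervalIntegrable g volume 0 r := by
  rw [intervalIntegrable_iff_integrableOn_Ioc_of_le hr]
  have hdom : IntegrableOn (fun x => g r / r ^ a * x ^ a) (Ioc 0 r) := by
    rw [← intervalIntegrable_iff_integrableOn_Ioc_of_le hr]
    exact (intervalIntegral.intervalIntegrable_rpow' ha).const_mul _
  refine hdom.mono' hmeas ((ae_restrict_iff' measurableSet_Ioc).2 <| .of_forall fun x hx => ?_)
  have hx0 := hx.1
  have hrx : 1 ≤ r / x := (one_le_div hx0).2 hx.2
  have hr0 : 0 < r := hx0.trans_le hx.2
  have := (hg x hx0 (r / x) hrx).1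
  rw [mul_div_cancel₀ _ hx0.ne', Real.div_rpow hr0.le hx0.le, div_mul_eq_mul_div,
    div_le_iff₀ (Real.rpow_pos_of_pos hx0 a)] at this
  rw [Real.norm_of_nonneg (hg0 x hx0), div_mul_eq_mul_div, le_div_iff₀ (Real.rpow_pos_of_pos hr0 a)]
  linarith

lemma inverse {F Finv : ℝ → ℝ} {p q : ℝ} (hF : PowerScaling F p q) (hp : 0 < p) (hq : 0 < q)
    (hF0 : F 0 = 0) (hmono : MonotoneOn F (Ici 0))
    (hright : ∀ s ∈ Ici (0 : ℝ), 0 ≤ Finv s ∧ F (Finv s) = s)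
    (hleft : ∀ x ∈ Ici (0 : ℝ), Finv (F x) = x) : PowerScaling Finv q⁻¹ p⁻¹ := by
  have hstrict : StrictMonoOn F (Ici 0) :=
    hmono.strictMonoOn_of_injOn fun x hx y hy hxy => by rw [← hleft x hx, hxy, hleft y hy]
  intro ρ hρ t ht
  obtain ⟨hu0, hFu⟩ := hright ρ hρ.le
  have hu : 0 < Finv ρ := hu0.lt_of_ne fun h => by rw [← h, hF0] at hFu; exact hρ.ne hFu
  have ht0 : 0 < t := by linarith
  obtain ⟨hv0, hFv⟩ := hright (ρ * t) (mem_Ici.2 (by positivity))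
  have hpow (c : ℝ) (hc : 0 < c) : 1 ≤ t ^ c⁻¹ := Real.one_le_rpow ht (inv_nonneg.2 hc.le)
  constructor
  · rw [mul_comm (t ^ q⁻¹), ← hstrict.le_iff_le (mem_Ici.2 (by positivity)) hv0, hFv]
    calc F (Finv ρ * t ^ q⁻¹) ≤ (t ^ q⁻¹) ^ q * F (Finv ρ) := (hF _ hu _ (hpow q hq)).2
      _ = ρ * t := by rw [Real.rpow_inv_rpow (by positivity) hq.ne', hFu, mul_comm]
  · rw [mul_comm (t ^ p⁻¹), ← hstrict.le_iff_le hv0 (mem_Ici.2 (by positivity)), hFv]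
    calc ρ * t = (t ^ p⁻¹) ^ p * F (Finv ρ) := by
          rw [Real.rpow_inv_rpow (by positivity) hp.ne', hFu, mul_comm]
      _ ≤ F (Finv ρ * t ^ p⁻¹) := (hF _ hu _ (hpow p hp)).1

lemma min_mul_le_and_le_max_mul {F : ℝ → ℝ} {p q : ℝ} (hF : PowerScaling F p q) (hpq : p ≤ q) :
    ∀ ρ > 0, ∀ t > 0,
      min (t ^ p) (t ^ q) * F ρ ≤ F (ρ * t) ∧ F (ρ * t) ≤ max (t ^ p) (t ^ q) * F ρ := by
  intro ρ hρ t ht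
  rcases le_total 1 t with ht1 | ht1
  · rw [min_eq_left (Real.rpow_le_rpow_of_exponent_le ht1 hpq),
      max_eq_right (Real.rpow_le_rpow_of_exponent_le ht1 hpq)]
    exact hF ρ hρ t ht1
  · rw [min_eq_right (Real.rpow_le_rpow_of_exponent_ge ht ht1 hpq),
      max_eq_left (Real.rpow_le_rpow_of_exponent_ge ht ht1 hpq)]
    -- dilate `ρ t` back to `ρ` by the factor `t⁻¹ ≥ 1`
    have := hF (ρ * t) (by positivity) t⁻¹ (one_le_inv₀ ht |>.2 ht1)
    rw [mul_inv_cancel_right₀ ht.ne', Real.inv_rpow ht.le, Real.inv_rpow ht.le] at this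
    rw [inv_mul_le_iff₀ (by positivity), le_inv_mul_iff₀ (by positivity)] at this
    exact this.symm

end PowerScaling

lemma monotoneOn_primitive {g : ℝ → ℝ} (hg : ∀ x > 0, 0 ≤ g x)
    (hint : ∀ r ≥ 0, IntervalIntegrable g volume 0 r) :
    MonotoneOn (fun x => ∫ s in (0 : ℝ)..x, g s) (Ici 0) := fun _ ha b hb hab =>
  intervalIntegral.integral_mono_interval le_rfl ha hab
    ((ae_restrict_iff' measurableSet_Ioc).2 <| .of_forall fun x hx => hg x hx.1) (hint b hb)

lemma monotoneOn_of_rightInvOn {F Finv : ℝ → ℝ} (hmono : MonotoneOn F (Ici 0))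
    (hright : ∀ s ∈ Ici (0 : ℝ), 0 ≤ Finv s ∧ F (Finv s) = s) : MonotoneOn Finv (Ici 0) := by
  intro a ha b hb hab
  by_contra! hlt
  have := hmono (hright b hb).1 (hright a ha).1 hlt.le
  rw [(hright b hb).2, (hright a ha).2] at this
  exact hlt.ne (congrArg Finv (le_antisymm hab this)).symm

lemma powerScaling_of_euler_deriv_bounds {ψ : ℝ → ℝ} {ℓ m : ℝ} (hℓ : 1 < ℓ) (hℓm : ℓ ≤ m)
    (hψ : ContDiffOn ℝ 2 ψ (Ioi 0)) (hlim : Tendsto ψ (𝓝[>] 0) (𝓝 0))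
    (h : ∀ t > 0, (ℓ - 2) * deriv ψ t ≤ t * deriv (deriv ψ) t ∧
      t * deriv (deriv ψ) t ≤ (m - 2) * deriv ψ t) :
    PowerScaling ψ (ℓ - 1) (m - 1) := by
  have hderiv {f : ℝ → ℝ} {n : WithTop ℕ∞} (hf : ContDiffOn ℝ n f (Ioi 0)) (hn : n ≠ 0) :
      ∀ x ∈ Ioi (0 : ℝ), HasDerivAt f (deriv f x) x := fun x hx =>
    ((hf.differentiableOn hn).differentiableAt (isOpen_Ioi.mem_nhds hx)).hasDerivAt
  have hψ' := hderiv hψ (by norm_num)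
  have hψ'' := hderiv (n := 1) (hψ.deriv_of_isOpen isOpen_Ioi (by norm_num)) (by norm_num)
  refine PowerScaling.of_euler_bounds hψ' fun x hx =>
    euler_bounds_of_deriv (by linarith) (by linarith) hψ' hψ'' hlim (fun y hy => ?_) hx
  constructor <;> linarith [h y hy]

lemma intervalIntegrable_sobG_integrand {Phinv : ℝ → ℝ} {p q N : ℝ} (hN : 0 < N)
    (hpN : N⁻¹ < p) (hPhinv : PowerScaling Phinv p q) (hnonneg : ∀ s ≥ 0, 0 ≤ Phinv s)
    (hmono : MonotoneOn Phinv (Ici 0)) :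
    ∀ r ≥ 0, IntervalIntegrable (fun s => Phinv s * s ^ (-(N + 1) / N)) volume 0 r := by
  intro r hr
  refine (hPhinv.mul_rpow _).intervalIntegrable ?_ hr
    (fun x hx => mul_nonneg (hnonneg x hx.le) (Real.rpow_nonneg hx.le _)) ?_
  · rw [neg_div, add_div, div_self hN.ne', one_div]
    linarith
  · exact ((aemeasurable_restrict_of_monotoneOn measurableSet_Ioc
      (hmono.mono fun x hx => mem_Ici.2 hx.1.le)).mul
      (measurable_id.pow_const _).aemeasurable).aestronglyMeasurable

lemma powerScaling_sobG {Phinv : ℝ → ℝ} {p q N : ℝ} (hN : 0 < N)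
    (hPhinv : PowerScaling Phinv p q)
    (hint : ∀ r ≥ 0, IntervalIntegrable (fun s => Phinv s * s ^ (-(N + 1) / N)) volume 0 r) :
    PowerScaling (sobG Phinv N) (p - N⁻¹) (q - N⁻¹) := by
  have hexp (c : ℝ) : c + -(N + 1) / N + 1 = c - N⁻¹ := by field_simp; ring
  have := (hPhinv.mul_rpow (-(N + 1) / N)).primitive hint
  rwa [hexp, hexp] at this

theorem stmt_15_general (φ : ℝ → ℝ) (ℓ m : ℝ)
    (hφ_pos : ∀ t > 0, 0 < φ t)
    (hφ_C2 : ContDiffOn ℝ 2 φ (Set.Ioi 0))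
    (hℓ : 1 < ℓ) (hℓm : ℓ ≤ m)
    (hφ1₀ : Tendsto (fun t => t * φ t) (nhdsWithin 0 (Set.Ioi 0)) (nhds 0))
    (hφ3 : ∀ t > 0,
      (ℓ - 2) * deriv (fun s => s * φ s) t ≤ t * deriv (deriv (fun s => s * φ s)) t ∧
      t * deriv (deriv (fun s => s * φ s)) t ≤ (m - 2) * deriv (fun s => s * φ s) t)
    (N : ℝ) (hN : m < N)
    (Phinv : ℝ → ℝ)
    (hPhinv : ∀ s ∈ Set.Ici (0:ℝ), 0 ≤ Phinv s ∧ Phi φ (Phinv s) = s)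
    (hPhinv2 : ∀ t ∈ Set.Ici (0:ℝ), Phinv (Phi φ t) = t)
    (Phistar : ℝ → ℝ)
    (hPhistar : ∀ t ∈ Set.Ici (0:ℝ), 0 ≤ Phistar t ∧ sobG Phinv N (Phistar t) = t)
    (hPhistar2 : ∀ t ∈ Set.Ici (0:ℝ), Phistar (sobG Phinv N t) = t)
    (lstar mstar : ℝ) (hlstar : lstar = ℓ * N / (N - ℓ)) (hmstar : mstar = m * N / (N - m)) :
    ∀ ρ > 0, ∀ t > 0,
      min (t ^ lstar) (t ^ mstar) * Phistar ρ ≤ Phistar (ρ * t) ∧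
      Phistar (ρ * t) ≤ max (t ^ lstar) (t ^ mstar) * Phistar ρ := by
  have hℓ0 : 0 < ℓ := by linarith
  have hm0 : 0 < m := by linarith
  have hN0 : 0 < N := by linarith
  have hmN : 0 < m⁻¹ - N⁻¹ := sub_pos.2 (inv_strictAnti₀ hm0 hN)
  have hℓN : m⁻¹ - N⁻¹ ≤ ℓ⁻¹ - N⁻¹ := sub_le_sub_right (inv_anti₀ hℓ0 hℓm) _
  have hψ := powerScaling_of_euler_deriv_bounds hℓ hℓm (contDiffOn_id.mul hφ_C2) hφ1₀ hφ3
  have hψ0 : ∀ x > 0, 0 ≤ x * φ x := fun x hx => (mul_pos hx (hφ_pos x hx)).le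
  have hψint : ∀ r ≥ 0, IntervalIntegrable (fun s => s * φ s) volume 0 r := fun r hr =>
    hψ.intervalIntegrable (by linarith) hr hψ0 <| ((contDiffOn_id.mul hφ_C2).continuousOn.mono
      Ioc_subset_Ioi_self).aestronglyMeasurable measurableSet_Ioc
  have hPhi : PowerScaling (Phi φ) ℓ m := by
    have := hψ.primitive hψint
    rwa [sub_add_cancel, sub_add_cancel] at this
  have hPhimono := monotoneOn_primitive hψ0 hψint
  have hPhinvs := hPhi.inverse hℓ0 hm0 intervalIntegral.integral_same hPhimono hPhinv hPhinv2
  have hint := intervalIntegrable_sobG_integrand hN0 (by linarith) hPhinvs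
    (fun s hs => (hPhinv s hs).1) (monotoneOn_of_rightInvOn hPhimono hPhinv)
  have hPhistars := (powerScaling_sobG hN0 hPhinvs hint).inverse hmN (by linarith)
    intervalIntegral.integral_same
    (monotoneOn_primitive (fun x hx => mul_nonneg (hPhinv x hx.le).1 (Real.rpow_nonneg hx.le _))
      hint) hPhistar hPhistar2
  have hstar (k : ℝ) (hk : 0 < k) (hkN : k < N) : k * N / (N - k) = (k⁻¹ - N⁻¹)⁻¹ := by
    field_simp [(sub_pos.2 hkN).ne']
  rw [hlstar, hmstar, hstar ℓ hℓ0 (by linarith), hstar m hm0 hN]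
  exact hPhistars.min_mul_le_and_le_max_mul (inv_anti₀ hmN hℓN)

/-- the Sobolev conjugate satisfies
`min{t^{ℓ*}, t^{m*}}·Φ*(ρ) ≤ Φ*(ρt) ≤ max{t^{ℓ*}, t^{m*}}·Φ*(ρ)` for all `ρ, t > 0`,
where `ℓ* = ℓN/(N−ℓ)` and `m* = mN/(N−m)`. -/
theorem stmt_15 (φ : ℝ → ℝ) (ℓ m : ℝ)
    (hφ_pos : ∀ t > 0, 0 < φ t)
    (hφ_C2 : ContDiffOn ℝ 2 φ (Set.Ioi 0))
    (hℓ : 1 < ℓ) (hℓm : ℓ ≤ m)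
    (hφ1₀ : Tendsto (fun t => t * φ t) (nhdsWithin 0 (Set.Ioi 0)) (nhds 0))
    (hφ1top : Tendsto (fun t => t * φ t) atTop atTop)
    (hφ2 : StrictMonoOn (fun t => t * φ t) (Set.Ioi 0))
    (hφ3 : ∀ t > 0,
      (ℓ - 2) * deriv (fun s => s * φ s) t ≤ t * deriv (deriv (fun s => s * φ s)) t ∧
      t * deriv (deriv (fun s => s * φ s)) t ≤ (m - 2) * deriv (fun s => s * φ s) t)
    (N : ℝ) (hN : m < N)
    (Phinv : ℝ → ℝ)
    (hPhinv : ∀ s ∈ Set.Ici (0:ℝ), 0 ≤ Phinv s ∧ Phi φ (Phinv s) = s)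
    (hPhinv2 : ∀ t ∈ Set.Ici (0:ℝ), Phinv (Phi φ t) = t)
    (Phistar : ℝ → ℝ)
    (hPhistar : ∀ t ∈ Set.Ici (0:ℝ), 0 ≤ Phistar t ∧ sobG Phinv N (Phistar t) = t)
    (hPhistar2 : ∀ t ∈ Set.Ici (0:ℝ), Phistar (sobG Phinv N t) = t)
    (lstar mstar : ℝ) (hlstar : lstar = ℓ * N / (N - ℓ)) (hmstar : mstar = m * N / (N - m)) :
    ∀ ρ > 0, ∀ t > 0,
      min (t ^ lstar) (t ^ mstar) * Phistar ρ ≤ Phistar (ρ * t) ∧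
      Phistar (ρ * t) ≤ max (t ^ lstar) (t ^ mstar) * Phistar ρ :=
  stmt_15_general φ ℓ m hφ_pos hφ_C2 hℓ hℓm hφ1₀ hφ3 N hN Phinv hPhinv hPhinv2 Phistar hPhistar
    hPhistar2 lstar mstar hlstar hmstar
end
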